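/- arXiv:1207.4232 — 8 statements merged into one kernel-verified Lean document; each statement's English description precedes it below -/
import Mathlib

section
/- Suppose φ satisfies the Lipschitz condition with constants L, M_max > 0 and maximum step h > 0, and let T < ∞. Let (C^i)_{0 ≤ i ≤ N} and (Ĉ^i)_{0 ≤ i ≤ N} be sequences of coefficient tuples such that Ĉ⁰ = C⁰, Ĉ^{i+1} = φ(Ĉ^i) for all i < N, and ‖C_j^{i+1} − φ_j(C^i)‖ ≤ T h^{d+2−j} for all 0 ≤ j ≤ d+1 and all i < N. If (Σ_{m=0}^{N−1} L^m) · T ≤ M_max, then for all 1 ≤ i ≤ N and all 0 ≤ j ≤ d+1, ‖C_j^i − Ĉ_j^i‖ ≤ (Σ_{m=0}^{i−1} L^m) · T · h^{d+2−j}. (When L ≠ 1, Σ_{m=0}^{i−1} L^m = (L^i − 1)/(L − 1).) -/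
open scoped BigOperators

/-- If `φ` satisfies the Lipschitz condition with constants `L, M_max > 0` and maximum
step `h > 0`, the computed sequence starts from the exact coefficients, and the local
truncation error is bounded by `T h^{d+2-j}`, then as long as `(Σ_{m<N} L^m) T ≤ M_max`,
the accumulated coefficient error satisfies
`‖C_j^i − Ĉ_j^i‖ ≤ (Σ_{m<i} L^m) T h^{d+2−j}` for `1 ≤ i ≤ N`. -/
theorem coeff_error_growth (d N : ℕ) (E : Fin (d + 2) → Type*)
    [∀ j, NormedAddCommGroup (E j)]
    (φ : (∀ j, E j) → ∀ j, E j) (L Mmax h T : ℝ)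
    (hL : 0 < L) (hM : 0 < Mmax) (hh : 0 < h)
    -- the Lipschitz condition
    (hφ : ∀ s : ℝ, 0 < s → s ≤ h → ∀ M : ℝ, 0 ≤ M → M ≤ Mmax →
      ∀ C Ch : ∀ j, E j, (∀ j, ‖C j - Ch j‖ ≤ M * s ^ (d + 2 - (j : ℕ))) →
        ∀ k, ‖φ C k - φ Ch k‖ ≤ L * M * s ^ (d + 2 - (k : ℕ)))
    (C Ch : ℕ → ∀ j, E j)
    (hCh0 : Ch 0 = C 0) (hCh : ∀ i < N, Ch (i + 1) = φ (Ch i))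
    -- local truncation error bound
    (hT : ∀ i < N, ∀ j, ‖C (i + 1) j - φ (C i) j‖ ≤ T * h ^ (d + 2 - (j : ℕ)))
    (hMN : (∑ m ∈ Finset.range N, L ^ m) * T ≤ Mmax) :
    ∀ i, 1 ≤ i → i ≤ N → ∀ j,
      ‖C i j - Ch i j‖ ≤ (∑ m ∈ Finset.range i, L ^ m) * T * h ^ (d + 2 - (j : ℕ)) := by
  intro i
  induction i with
  | zero => omega
  | succ i ih =>
    intro _ hiN j
    have hiN' : i < N := hiN
    have hN1 : 0 < N := by omega
    -- T is nonnegative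
    have hT0 : 0 ≤ T := by
      have := hT 0 hN1 0
      have hp : 0 < h ^ (d + 2 - ((0 : Fin (d+2)) : ℕ)) := by positivity
      nlinarith [norm_nonneg (C 1 (0 : Fin (d+2)) - φ (C 0) (0 : Fin (d+2)))]
    have hsum_nonneg : ∀ n : ℕ, (0:ℝ) ≤ ∑ m ∈ Finset.range n, L ^ m := by
      intro n; positivity
    by_cases hi0 : i = 0
    · subst hi0
      rw [hCh 0 hN1, hCh0]
      simpa using hT 0 hN1 j
    · have hi1 : 1 ≤ i := by omega
      have ihj := ih hi1 (by omega)
      set M : ℝ := (∑ m ∈ Finset.range i, L ^ m) * T with hMdef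
      have hM0 : 0 ≤ M := mul_nonneg (hsum_nonneg i) hT0
      have hMle : M ≤ Mmax := by
        refine le_trans ?_ hMN
        apply mul_le_mul_of_nonneg_right _ hT0
        exact Finset.sum_le_sum_of_subset_of_nonneg
          (Finset.range_subset_range.mpr (by omega))
          (fun k _ _ => by positivity)
      have hlip := hφ h hh le_rfl M hM0 hMle (C i) (Ch i) ihj j
      have key : ‖C (i+1) j - Ch (i+1) j‖ ≤
          T * h ^ (d + 2 - (j : ℕ)) + L * M * h ^ (d + 2 - (j : ℕ)) := by
        rw [hCh i hiN']
        calc ‖C (i+1) j - φ (Ch i) j‖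
            ≤ ‖C (i+1) j - φ (C i) j‖ + ‖φ (C i) j - φ (Ch i) j‖ := by
              have := norm_sub_le_norm_sub_add_norm_sub (C (i+1) j) (φ (C i) j) (φ (Ch i) j)
              linarith [norm_add_le (C (i+1) j - φ (C i) j) (φ (C i) j - φ (Ch i) j),
                norm_sub_le (C (i+1) j) (φ (C i) j)]
          _ ≤ T * h ^ (d + 2 - (j : ℕ)) + L * M * h ^ (d + 2 - (j : ℕ)) :=
              add_le_add (hT i hiN' j) hlip
      have hgeom : (∑ m ∈ Finset.range (i+1), L ^ m) = L * ∑ m ∈ Finset.range i, L ^ m + 1 :=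
        geom_sum_succ
      calc ‖C (i+1) j - Ch (i+1) j‖
          ≤ T * h ^ (d + 2 - (j : ℕ)) + L * M * h ^ (d + 2 - (j : ℕ)) := key
        _ = (∑ m ∈ Finset.range (i+1), L ^ m) * T * h ^ (d + 2 - (j : ℕ)) := by
            rw [hgeom, hMdef]; ring
end

section
/- Let K ⊂ ℝⁿ be compact, let f, g : ℝⁿ → ℝⁿ and q, r : ℝⁿ → ℝ be continuous with q ≥ 0 and r > 0 on K, and let π be C^{d+2} on an open convex set U containing K, solving the HJB equations on U with feedback κ = −(∇π·g)/r and being a strict Lyapunov function on K. Then there exist h > 0 and T < ∞ such that for all x⁰ ∈ K and all y ∈ K with ‖y − x⁰‖ ≤ h, letting π̄ denote the degree-(d+1) Taylor polynomial of π at x⁰: ∇π̄(y) ≠ 0, z(∇π̄(y); y) is well defined, and ‖∇π(y) − (z(∇π̄(y); y)/‖∇π̄(y)‖) · ∇π̄(y)‖ ≤ T ‖∇π(y) − ∇π̄(y)‖. -/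
open scoped BigOperators RealInnerProductSpace Topology

/-- The root `z(w;x)` of the scalar HJB quadratic
`0 = −(g_n²/(2r))z² + f_n z + q`, with `f_n = (w/‖w‖)·f(x)`, `g_n = (w/‖w‖)·g(x)`. -/
noncomputable def zFun (n : ℕ)
    (f g : EuclideanSpace ℝ (Fin n) → EuclideanSpace ℝ (Fin n))
    (q r : EuclideanSpace ℝ (Fin n) → ℝ)
    (x w : EuclideanSpace ℝ (Fin n)) : ℝ :=
  if ⟪w, g x⟫ = 0 then -q x / (⟪w, f x⟫ / ‖w‖)
  else r x * (⟪w, f x⟫ / ‖w‖ +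
      Real.sqrt ((⟪w, f x⟫ / ‖w‖) ^ 2 + 2 * (q x / r x) * (⟪w, g x⟫ / ‖w‖) ^ 2)) /
    (⟪w, g x⟫ / ‖w‖) ^ 2

/-- The degree-`(d+1)` Taylor polynomial of `π` centered at `x0`. -/
noncomputable def taylorPoly (n d : ℕ) (π : EuclideanSpace ℝ (Fin n) → ℝ)
    (x0 y : EuclideanSpace ℝ (Fin n)) : ℝ :=
  ∑ ℓ ∈ Finset.range (d + 2),
    (1 / (ℓ.factorial : ℝ)) * iteratedFDeriv ℝ ℓ π x0 (fun _ => y - x0)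

section TaylorGrad

variable {n d : ℕ}

local notation "E" => EuclideanSpace ℝ (Fin n)

/-- the Fréchet derivative of the Taylor polynomial in `y` -/
noncomputable def Lmap (n d : ℕ) (π : EuclideanSpace ℝ (Fin n) → ℝ)
    (x0 y : EuclideanSpace ℝ (Fin n)) : EuclideanSpace ℝ (Fin n) →L[ℝ] ℝ :=
  ∑ ℓ ∈ Finset.range (d + 2),
    (1 / (ℓ.factorial : ℝ)) •
      ∑ i : Fin ℓ, ((iteratedFDeriv ℝ ℓ π x0).toContinuousLinearMap
          (fun _ => y - x0) i).comp (ContinuousLinearMap.id ℝ (EuclideanSpace ℝ (Fin n)))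

theorem taylorPoly_hasFDerivAt (π : E → ℝ) (x0 y : E) :
    HasFDerivAt (taylorPoly n d π x0) (Lmap n d π x0 y) y := by
  classical
  unfold taylorPoly Lmap
  apply HasFDerivAt.fun_sum
  intro ℓ _
  exact (HasFDerivAt.multilinear_comp (iteratedFDeriv ℝ ℓ π x0)
    (fun _ : Fin ℓ => (hasFDerivAt_id y).sub_const x0)).const_mul _

theorem Lmap_apply (π : E → ℝ) (x0 y v : E) :
    Lmap n d π x0 y v = ∑ ℓ ∈ Finset.range (d + 2), (1 / (ℓ.factorial : ℝ)) *
      ∑ i : Fin ℓ, iteratedFDeriv ℝ ℓ π x0 (Function.update (fun _ => y - x0) i v) := by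
  classical
  simp [Lmap, ContinuousLinearMap.sum_apply]

theorem gradient_taylorPoly (π : E → ℝ) (x0 y : E) :
    gradient (taylorPoly n d π x0) y =
      (InnerProductSpace.toDual ℝ (EuclideanSpace ℝ (Fin n))).symm (Lmap n d π x0 y) := by
  rw [gradient, (taylorPoly_hasFDerivAt π x0 y).fderiv]

theorem Lmap_diag (π : E → ℝ) (x0 : E) : Lmap n d π x0 x0 = fderiv ℝ π x0 := by
  classical
  ext v
  rw [Lmap_apply]
  rw [Finset.sum_eq_single 1]
  · have : Function.update (fun _ : Fin 1 => x0 - x0) 0 v = fun _ => v := by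
      funext k
      have : k = 0 := Subsingleton.elim _ _
      subst this
      simp
    simp [this]
  · intro ℓ _ hℓ
    rcases Nat.lt_or_ge ℓ 2 with h2 | h2
    · interval_cases ℓ
      · simp
      · exact absurd rfl hℓ
    · rw [Finset.sum_eq_zero, mul_zero]
      intro i _
      have h1 : (1 : ℕ) < ℓ := h2
      obtain ⟨j, hj⟩ : ∃ j : Fin ℓ, j ≠ i := by
        rcases Decidable.eq_or_ne i ⟨0, by omega⟩ with rfl | hne
        · exact ⟨⟨1, by omega⟩, by simp [Fin.ext_iff]⟩
        · exact ⟨⟨0, by omega⟩, fun h => hne h.symm⟩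
      apply (iteratedFDeriv ℝ ℓ π x0).map_coord_zero j
      simp [Function.update_apply, hj]
  · intro h
    exact absurd (Finset.mem_range.2 (by omega)) h

theorem gradient_taylorPoly_diag (π : E → ℝ) (x0 : E) :
    gradient (taylorPoly n d π x0) x0 = gradient π x0 := by
  rw [gradient_taylorPoly, Lmap_diag, gradient]

theorem toDual_symm_coord (φ : StrongDual ℝ (EuclideanSpace ℝ (Fin n))) (j : Fin n) :
    ((InnerProductSpace.toDual ℝ (EuclideanSpace ℝ (Fin n))).symm φ) j
      = φ (EuclideanSpace.single j 1) := by
  rw [← InnerProductSpace.toDual_symm_apply (𝕜 := ℝ)]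
  rw [real_inner_comm, EuclideanSpace.inner_single_left]
  simp

theorem continuousOn_gradient_taylorPoly (π : E → ℝ) (U : Set E) (hUopen : IsOpen U)
    (m : ℕ∞) (hd : (d : ℕ∞) + 2 ≤ m) (hπ : ContDiffOn ℝ m π U) :
    ContinuousOn (fun p : E × E => gradient (taylorPoly n d π p.1) p.2)
      (U ×ˢ (Set.univ : Set E)) := by
  classical
  have hA : ∀ ℓ : ℕ, ℓ ∈ Finset.range (d + 2) →
      ContinuousOn (iteratedFDeriv ℝ ℓ π) U := by
    intro ℓ hℓ
    have h1 : (ℓ : ℕ∞) ≤ m := by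
      refine le_trans ?_ hd
      have : ℓ ≤ d + 2 := by
        have := Finset.mem_range.1 hℓ; omega
      exact_mod_cast this
    have hℓm : (ℓ : WithTop ℕ∞) ≤ (m : WithTop ℕ∞) := by exact_mod_cast h1
    have := hπ.continuousOn_iteratedFDerivWithin hℓm hUopen.uniqueDiffOn
    exact this.congr fun x hx => (iteratedFDerivWithin_of_isOpen ℓ hUopen hx).symm
  have key : ∀ j : Fin n, ContinuousOn
      (fun p : E × E => Lmap n d π p.1 p.2 (EuclideanSpace.single j 1))
      (U ×ˢ (Set.univ : Set E)) := by
    intro j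
    have : (fun p : E × E => Lmap n d π p.1 p.2 (EuclideanSpace.single j 1))
        = fun p : E × E => ∑ ℓ ∈ Finset.range (d + 2), (1 / (ℓ.factorial : ℝ)) *
          ∑ i : Fin ℓ, iteratedFDeriv ℝ ℓ π p.1
            (Function.update (fun _ => p.2 - p.1) i (EuclideanSpace.single j 1)) := by
      funext p; rw [Lmap_apply]
    rw [this]
    apply continuousOn_finset_sum
    intro ℓ hℓ
    apply ContinuousOn.mul continuousOn_const
    apply continuousOn_finset_sum
    intro i _
    have hargs : Continuous (fun p : E × E =>
        Function.update (fun _ : Fin ℓ => p.2 - p.1) i (EuclideanSpace.single j 1)) := by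
      apply continuous_pi
      intro k
      rcases Decidable.eq_or_ne k i with rfl | hk
      · simp only [Function.update_self]; exact continuous_const
      · simp only [Function.update_of_ne hk]
        exact continuous_snd.sub continuous_fst
    have hpair : ContinuousOn (fun p : E × E =>
        ((iteratedFDeriv ℝ ℓ π p.1 : ContinuousMultilinearMap ℝ (fun _ : Fin ℓ => E) ℝ),
          Function.update (fun _ : Fin ℓ => p.2 - p.1) i (EuclideanSpace.single j 1)))
        (U ×ˢ (Set.univ : Set E)) := by
      apply ContinuousOn.prodMk
      · exact (hA ℓ hℓ).comp continuous_fst.continuousOn (fun p hp => hp.1)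
      · exact hargs.continuousOn
    exact continuous_eval.comp_continuousOn hpair
  have : (fun p : E × E => gradient (taylorPoly n d π p.1) p.2)
      = fun p : E × E => (PiLp.continuousLinearEquiv 2 ℝ (fun _ : Fin n => ℝ)).symm
          (fun j => Lmap n d π p.1 p.2 (EuclideanSpace.single j 1)) := by
    funext p
    rw [gradient_taylorPoly]
    apply PiLp.ext
    intro j
    rw [toDual_symm_coord]
    rfl
  rw [this]
  exact ((PiLp.continuousLinearEquiv 2 ℝ (fun _ : Fin n => ℝ)).symm.continuous).comp_continuousOn
    (continuousOn_pi.2 key)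

end TaylorGrad

section ZBranch

variable {n : ℕ}

local notation "E" => EuclideanSpace ℝ (Fin n)

/-- branch of `zFun` where `⟪w,g⟫ ≠ 0`, as a function of all data. -/
noncomputable def Z1 (n : ℕ)
    (p : (EuclideanSpace ℝ (Fin n) × EuclideanSpace ℝ (Fin n) × ℝ × ℝ) ×
      EuclideanSpace ℝ (Fin n)) : ℝ :=
  p.1.2.2.2 * (⟪p.2, p.1.1⟫ / ‖p.2‖ +
      Real.sqrt ((⟪p.2, p.1.1⟫ / ‖p.2‖) ^ 2 +
        2 * (p.1.2.2.1 / p.1.2.2.2) * (⟪p.2, p.1.2.1⟫ / ‖p.2‖) ^ 2)) /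
    (⟪p.2, p.1.2.1⟫ / ‖p.2‖) ^ 2

/-- branch of `zFun` valid near points where `⟪w,g⟫ = 0`. -/
noncomputable def Z2 (n : ℕ)
    (p : (EuclideanSpace ℝ (Fin n) × EuclideanSpace ℝ (Fin n) × ℝ × ℝ) ×
      EuclideanSpace ℝ (Fin n)) : ℝ :=
  2 * p.1.2.2.1 /
    (Real.sqrt ((⟪p.2, p.1.1⟫ / ‖p.2‖) ^ 2 +
        2 * (p.1.2.2.1 / p.1.2.2.2) * (⟪p.2, p.1.2.1⟫ / ‖p.2‖) ^ 2) - ⟪p.2, p.1.1⟫ / ‖p.2‖)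

theorem quad_sqrt {P G Q R W : ℝ} (hW : 0 < W) (hR : 0 < R)
    (h1 : P + Q = G ^ 2 / (2 * R)) (h2 : P - G ^ 2 / R < 0) :
    0 < (P / W) ^ 2 + 2 * (Q / R) * (G / W) ^ 2 ∧
    Real.sqrt ((P / W) ^ 2 + 2 * (Q / R) * (G / W) ^ 2) = (G ^ 2 / R - P) / W := by
  have hQeq : Q = G ^ 2 / (2 * R) - P := by linarith
  have key : (P / W) ^ 2 + 2 * (Q / R) * (G / W) ^ 2 = ((G ^ 2 / R - P) / W) ^ 2 := by
    rw [hQeq]; field_simp; ring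
  have hpos : 0 < (G ^ 2 / R - P) / W := div_pos (by linarith) hW
  refine ⟨?_, ?_⟩
  · rw [key]; positivity
  · rw [key, Real.sqrt_sq hpos.le]

theorem zFun_eq_norm (f g : E → E) (q r : E → ℝ) (x : E) {w : E} (hw : w ≠ 0)
    (hR : 0 < r x) (h1 : ⟪w, f x⟫ + q x = ⟪w, g x⟫ ^ 2 / (2 * r x))
    (h2 : ⟪w, f x⟫ - ⟪w, g x⟫ ^ 2 / r x < 0) :
    zFun n f g q r x w = ‖w‖ := by
  have hW : (0 : ℝ) < ‖w‖ := norm_pos_iff.2 hw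
  set P := (⟪w, f x⟫ : ℝ) with hPdef
  set G := (⟪w, g x⟫ : ℝ) with hGdef
  set W := ‖w‖ with hWdef
  by_cases hG : G = 0
  · rw [zFun, if_pos (hGdef ▸ hG)]
    rw [hG] at h1 h2
    have hP : P < 0 := by
      have : (0:ℝ) ^ 2 / r x = 0 := by simp
      rw [this] at h2; linarith
    have hq : q x = -P := by
      have h0 : (0:ℝ) ^ 2 / (2 * r x) = 0 := by simp
      rw [h0] at h1; linarith
    rw [hq, ← hPdef, ← hWdef]
    rw [neg_neg, div_div_eq_mul_div, mul_comm]
    exact mul_div_cancel_right₀ W hP.ne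
  · rw [zFun, if_neg (hGdef ▸ hG)]
    obtain ⟨hD, hsqrt⟩ := quad_sqrt hW hR h1 h2
    rw [← hPdef, ← hGdef, ← hWdef, hsqrt]
    rw [← add_div, div_pow]
    have hsum : P + (G ^ 2 / r x - P) = G ^ 2 / r x := by ring
    rw [hsum]
    have hG2 : G ^ 2 ≠ 0 := pow_ne_zero 2 hG
    have hW0 : W ≠ 0 := hW.ne'
    have hr0 : r x ≠ 0 := hR.ne'
    field_simp

theorem zFun_eq_Z1 (f g : E → E) (q r : E → ℝ) (x w : E) (hG : ⟪w, g x⟫ ≠ 0) :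
    zFun n f g q r x w = Z1 n ((f x, g x, q x, r x), w) := by
  rw [zFun, if_neg hG]; rfl

theorem zFun_eq_Z2 (f g : E → E) (q r : E → ℝ) (x : E) {w : E} (hw : w ≠ 0)
    (hR : 0 < r x) (hQ : 0 ≤ q x) (hP : ⟪w, f x⟫ < 0) :
    zFun n f g q r x w = Z2 n ((f x, g x, q x, r x), w) := by
  have hW : (0 : ℝ) < ‖w‖ := norm_pos_iff.2 hw
  have ha : ⟪w, f x⟫ / ‖w‖ < 0 := div_neg_of_neg_of_pos hP hW
  by_cases hG : ⟪w, g x⟫ = 0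
  · rw [zFun, if_pos hG, Z2]
    simp only [hG]
    have h0 : ((0:ℝ) / ‖w‖) ^ 2 = 0 := by simp
    rw [h0, mul_zero, add_zero, Real.sqrt_sq_eq_abs, abs_of_neg ha]
    set P := (⟪w, f x⟫ : ℝ) with hPdef
    rw [show -(P / ‖w‖) - P / ‖w‖ = -(2 * (P / ‖w‖)) by ring]
    rw [div_neg, div_div_eq_mul_div]
    field_simp
  · rw [zFun, if_neg hG, Z2]
    set a := (⟪w, f x⟫ / ‖w‖ : ℝ) with hadef
    set b := (⟪w, g x⟫ / ‖w‖ : ℝ) with hbdef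
    have hb : b ≠ 0 := div_ne_zero hG hW.ne'
    set D := a ^ 2 + 2 * (q x / r x) * b ^ 2 with hDdef
    have hD0 : 0 ≤ D := by positivity
    have hsd : Real.sqrt D * Real.sqrt D = D := Real.mul_self_sqrt hD0
    have hden : 0 < Real.sqrt D - a := by
      have := Real.sqrt_nonneg D; linarith
    rw [div_eq_div_iff (by positivity) hden.ne']
    have : (Real.sqrt D + a) * (Real.sqrt D - a) = D - a ^ 2 := by
      calc (Real.sqrt D + a) * (Real.sqrt D - a) = Real.sqrt D * Real.sqrt D - a ^ 2 := by ring
        _ = D - a ^ 2 := by rw [hsd]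
    calc r x * (a + Real.sqrt D) * (Real.sqrt D - a) = r x * (D - a ^ 2) := by
          rw [← this]; ring
      _ = 2 * q x * b ^ 2 := by rw [hDdef]; field_simp; ring

section contdiff

variable {p : (EuclideanSpace ℝ (Fin n) × EuclideanSpace ℝ (Fin n) × ℝ × ℝ) ×
    EuclideanSpace ℝ (Fin n)}

theorem contDiffAt_parts (hw : p.2 ≠ 0) (hR : p.1.2.2.2 ≠ 0) :
    ContDiffAt ℝ 1 (fun p' : (EuclideanSpace ℝ (Fin n) × EuclideanSpace ℝ (Fin n) × ℝ × ℝ) ×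
      EuclideanSpace ℝ (Fin n) =>
        (⟪p'.2, p'.1.1⟫ / ‖p'.2‖) ^ 2 +
          2 * (p'.1.2.2.1 / p'.1.2.2.2) * (⟪p'.2, p'.1.2.1⟫ / ‖p'.2‖) ^ 2) p ∧
    ContDiffAt ℝ 1 (fun p' : (EuclideanSpace ℝ (Fin n) × EuclideanSpace ℝ (Fin n) × ℝ × ℝ) ×
      EuclideanSpace ℝ (Fin n) => ⟪p'.2, p'.1.1⟫ / ‖p'.2‖) p ∧
    ContDiffAt ℝ 1 (fun p' : (EuclideanSpace ℝ (Fin n) × EuclideanSpace ℝ (Fin n) × ℝ × ℝ) ×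
      EuclideanSpace ℝ (Fin n) => ⟪p'.2, p'.1.2.1⟫ / ‖p'.2‖) p := by
  have hWne : ‖p.2‖ ≠ 0 := norm_ne_zero_iff.2 hw
  have cW : ContDiffAt ℝ 1 (fun p' : (EuclideanSpace ℝ (Fin n) ×
      EuclideanSpace ℝ (Fin n) × ℝ × ℝ) × EuclideanSpace ℝ (Fin n) => ‖p'.2‖) p :=
    contDiffAt_snd.norm ℝ hw
  have ca : ContDiffAt ℝ 1 (fun p' : (EuclideanSpace ℝ (Fin n) ×
      EuclideanSpace ℝ (Fin n) × ℝ × ℝ) × EuclideanSpace ℝ (Fin n) =>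
      ⟪p'.2, p'.1.1⟫ / ‖p'.2‖) p :=
    (contDiffAt_snd.inner ℝ (contDiff_fst.fst).contDiffAt).div cW hWne
  have cb : ContDiffAt ℝ 1 (fun p' : (EuclideanSpace ℝ (Fin n) ×
      EuclideanSpace ℝ (Fin n) × ℝ × ℝ) × EuclideanSpace ℝ (Fin n) =>
      ⟪p'.2, p'.1.2.1⟫ / ‖p'.2‖) p :=
    (contDiffAt_snd.inner ℝ (contDiff_fst.snd.fst).contDiffAt).div cW hWne
  refine ⟨?_, ca, cb⟩
  exact ((ca.pow 2).add (((contDiffAt_const.mul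
    ((contDiff_fst.snd.snd.fst.contDiffAt).div
      (contDiff_fst.snd.snd.snd.contDiffAt) hR)).mul (cb.pow 2))))

theorem contDiffAt_Z1 (hw : p.2 ≠ 0) (hR : p.1.2.2.2 ≠ 0)
    (hG : ⟪p.2, p.1.2.1⟫ ≠ 0)
    (hD : (⟪p.2, p.1.1⟫ / ‖p.2‖) ^ 2 +
      2 * (p.1.2.2.1 / p.1.2.2.2) * (⟪p.2, p.1.2.1⟫ / ‖p.2‖) ^ 2 ≠ 0) :
    ContDiffAt ℝ 1 (Z1 n) p := by
  obtain ⟨cD, ca, cb⟩ := contDiffAt_parts hw hR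
  have hWne : ‖p.2‖ ≠ 0 := norm_ne_zero_iff.2 hw
  have hb : (⟪p.2, p.1.2.1⟫ / ‖p.2‖) ^ 2 ≠ 0 := pow_ne_zero 2 (div_ne_zero hG hWne)
  exact ((contDiff_fst.snd.snd.snd.contDiffAt).mul (ca.add (cD.sqrt hD))).div (cb.pow 2) hb

theorem contDiffAt_Z2 (hw : p.2 ≠ 0) (hR : p.1.2.2.2 ≠ 0)
    (hD : (⟪p.2, p.1.1⟫ / ‖p.2‖) ^ 2 +
      2 * (p.1.2.2.1 / p.1.2.2.2) * (⟪p.2, p.1.2.1⟫ / ‖p.2‖) ^ 2 ≠ 0)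
    (hden : Real.sqrt ((⟪p.2, p.1.1⟫ / ‖p.2‖) ^ 2 +
      2 * (p.1.2.2.1 / p.1.2.2.2) * (⟪p.2, p.1.2.1⟫ / ‖p.2‖) ^ 2)
        - ⟪p.2, p.1.1⟫ / ‖p.2‖ ≠ 0) :
    ContDiffAt ℝ 1 (Z2 n) p := by
  obtain ⟨cD, ca, cb⟩ := contDiffAt_parts hw hR
  exact (contDiffAt_const.mul (contDiff_fst.snd.snd.fst.contDiffAt)).div
    ((cD.sqrt hD).sub ca) hden

theorem local_bound (f g : E → E) (q r : E → ℝ)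
    (hf : Continuous f) (hg : Continuous g) (hq : Continuous q) (hr : Continuous r)
    (K : Set E) (hq0 : ∀ x ∈ K, 0 ≤ q x) (hr0 : ∀ x ∈ K, 0 < r x)
    (grad : E → E)
    (hwne : ∀ x ∈ K, grad x ≠ 0)
    (hrel : ∀ x ∈ K, ⟪grad x, f x⟫ + q x = ⟪grad x, g x⟫ ^ 2 / (2 * r x))
    (hLy : ∀ x ∈ K, ⟪grad x, f x⟫ - ⟪grad x, g x⟫ ^ 2 / r x < 0)
    (y₀ : E) (hy₀ : y₀ ∈ K) (hgc : ContinuousAt grad y₀) :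
    ∃ V ∈ 𝓝 y₀, ∃ ε > (0:ℝ), ∃ L : ℝ, 0 ≤ L ∧ ∀ y ∈ K ∩ V, ∀ w : E,
      ‖w - grad y‖ < ε → (w ≠ 0 ∧ (⟪w, g y⟫ = 0 → ⟪w, f y⟫ ≠ 0) ∧
        |zFun n f g q r y w - ‖w‖| ≤ L * ‖w - grad y‖) := by
  classical
  set w₀ := grad y₀ with hw₀def
  have hw₀ : w₀ ≠ 0 := hwne y₀ hy₀
  have hW₀ : (0:ℝ) < ‖w₀‖ := norm_pos_iff.2 hw₀
  have hR₀ : 0 < r y₀ := hr0 y₀ hy₀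
  obtain ⟨hD₀pos, hsqrt₀⟩ := quad_sqrt (P := ⟪w₀, f y₀⟫) (G := ⟪w₀, g y₀⟫)
    (Q := q y₀) (R := r y₀) hW₀ hR₀ (hrel y₀ hy₀) (hLy y₀ hy₀)
  -- the parameter map
  set m : E × E → (E × E × ℝ × ℝ) × E := fun yw => ((f yw.1, g yw.1, q yw.1, r yw.1), yw.2)
    with hmdef
  have hmc : Continuous m := by
    apply Continuous.prodMk
    · exact ((hf.comp continuous_fst).prodMk ((hg.comp continuous_fst).prodMk
        ((hq.comp continuous_fst).prodMk (hr.comp continuous_fst))))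
    · exact continuous_snd
  have hc1 : Continuous fun yw : E × E => (⟪yw.2, f yw.1⟫ : ℝ) :=
    continuous_snd.inner (hf.comp continuous_fst)
  have hc2 : Continuous fun yw : E × E => (⟪yw.2, g yw.1⟫ : ℝ) :=
    continuous_snd.inner (hg.comp continuous_fst)
  have hzn : ∀ y ∈ K, zFun n f g q r y (grad y) = ‖grad y‖ := fun y hy =>
    zFun_eq_norm f g q r y (hwne y hy) (hr0 y hy) (hrel y hy) (hLy y hy)
  by_cases hG₀ : ⟪w₀, g y₀⟫ = 0
  · -- branch 2
    have hP₀ : ⟪w₀, f y₀⟫ < 0 := by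
      have := hLy y₀ hy₀
      rw [hG₀] at this
      simpa using this
    have ha₀ : ⟪w₀, f y₀⟫ / ‖w₀‖ < 0 := div_neg_of_neg_of_pos hP₀ hW₀
    have hden₀ : Real.sqrt ((⟪w₀, f y₀⟫ / ‖w₀‖) ^ 2 +
        2 * (q y₀ / r y₀) * (⟪w₀, g y₀⟫ / ‖w₀‖) ^ 2) - ⟪w₀, f y₀⟫ / ‖w₀‖ ≠ 0 := by
      have := Real.sqrt_nonneg ((⟪w₀, f y₀⟫ / ‖w₀‖) ^ 2 +
        2 * (q y₀ / r y₀) * (⟪w₀, g y₀⟫ / ‖w₀‖) ^ 2)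
      intro h; linarith [ha₀]
    have hCD : ContDiffAt ℝ 1 (Z2 n) (m (y₀, w₀)) :=
      contDiffAt_Z2 (p := m (y₀, w₀)) hw₀ hR₀.ne' hD₀pos.ne' hden₀
    obtain ⟨L, t, ht, hlip⟩ := hCD.exists_lipschitzOnWith
    -- open set of good pairs
    set S : Set (E × E) := {yw | m yw ∈ interior t ∧ ⟪yw.2, f yw.1⟫ < 0 ∧ yw.2 ≠ 0 ∧
      0 < r yw.1} with hSdef
    have hSopen : IsOpen S := by
      refine IsOpen.inter (hmc.isOpen_preimage _ isOpen_interior) ?_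
      refine IsOpen.inter ?_ (IsOpen.inter ?_ ?_)
      · exact isOpen_lt hc1 continuous_const
      · exact isOpen_compl_iff.2 (isClosed_singleton.preimage continuous_snd)
      · exact isOpen_lt continuous_const (hr.comp continuous_fst)
    have hp₀S : (y₀, w₀) ∈ S := by
      refine ⟨mem_interior_iff_mem_nhds.2 ht, hP₀, hw₀, hR₀⟩
    obtain ⟨ρ, hρ, hball⟩ := Metric.isOpen_iff.1 hSopen _ hp₀S
    have hVnhds : Metric.ball y₀ (ρ/2) ∩ grad ⁻¹' Metric.ball w₀ (ρ/2) ∈ 𝓝 y₀ := by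
      refine Filter.inter_mem (Metric.ball_mem_nhds _ (by linarith)) ?_
      exact hgc.preimage_mem_nhds (Metric.ball_mem_nhds _ (by linarith))
    refine ⟨_, hVnhds, ρ/2, by linarith, (L:ℝ) + 1, by positivity, ?_⟩
    rintro y ⟨hyK, hyB, hyG⟩ w hwnear
    have hyS : (y, w) ∈ S := by
      apply hball
      rw [Metric.mem_ball, Prod.dist_eq, max_lt_iff]
      constructor
      · exact lt_trans (Metric.mem_ball.1 hyB) (by linarith)
      · have h1 : dist w (grad y) < ρ/2 := by rwa [dist_eq_norm]
        have h2 : dist (grad y) w₀ < ρ/2 := Metric.mem_ball.1 hyG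
        calc dist w w₀ ≤ dist w (grad y) + dist (grad y) w₀ := dist_triangle _ _ _
          _ < ρ := by linarith
    have hyS' : (y, grad y) ∈ S := by
      apply hball
      rw [Metric.mem_ball, Prod.dist_eq, max_lt_iff]
      exact ⟨lt_trans (Metric.mem_ball.1 hyB) (by linarith),
        lt_trans (Metric.mem_ball.1 hyG) (by linarith)⟩
    obtain ⟨hmt, hPneg, hwne', hrpos⟩ := hyS
    obtain ⟨hmt', hPneg', -, -⟩ := hyS'
    refine ⟨hwne', fun _ => ne_of_lt hPneg, ?_⟩
    have e1 : zFun n f g q r y w = Z2 n (m (y, w)) :=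
      zFun_eq_Z2 f g q r y hwne' hrpos (hq0 y hyK) hPneg
    have e2 : zFun n f g q r y (grad y) = Z2 n (m (y, grad y)) :=
      zFun_eq_Z2 f g q r y (hwne y hyK) hrpos (hq0 y hyK) hPneg'
    have hdist : dist (Z2 n (m (y, w))) (Z2 n (m (y, grad y))) ≤ L * ‖w - grad y‖ := by
      have := hlip.dist_le_mul _ (interior_subset hmt) _ (interior_subset hmt')
      refine le_trans this ?_
      have : dist (m (y, w)) (m (y, grad y)) = ‖w - grad y‖ := by
        rw [hmdef, Prod.dist_eq]
        simp [dist_eq_norm]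
      rw [this]
    calc |zFun n f g q r y w - ‖w‖|
        ≤ |zFun n f g q r y w - zFun n f g q r y (grad y)| + |zFun n f g q r y (grad y) - ‖w‖| :=
          abs_sub_le _ _ _
      _ ≤ L * ‖w - grad y‖ + ‖w - grad y‖ := by
          refine add_le_add ?_ ?_
          · rw [e1, e2, ← Real.dist_eq]; exact hdist
          · rw [hzn y hyK]
            calc |‖grad y‖ - ‖w‖| ≤ ‖grad y - w‖ := abs_norm_sub_norm_le _ _
              _ = ‖w - grad y‖ := norm_sub_rev _ _
      _ = ((L:ℝ) + 1) * ‖w - grad y‖ := by ring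
  · -- branch 1
    have hCD : ContDiffAt ℝ 1 (Z1 n) (m (y₀, w₀)) :=
      contDiffAt_Z1 (p := m (y₀, w₀)) hw₀ hR₀.ne' hG₀ hD₀pos.ne'
    obtain ⟨L, t, ht, hlip⟩ := hCD.exists_lipschitzOnWith
    set S : Set (E × E) := {yw | m yw ∈ interior t ∧ ⟪yw.2, g yw.1⟫ ≠ 0 ∧ yw.2 ≠ 0}
      with hSdef
    have hSopen : IsOpen S := by
      refine IsOpen.inter (hmc.isOpen_preimage _ isOpen_interior) ?_
      refine IsOpen.inter ?_ ?_
      · exact isOpen_compl_iff.2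
          (isClosed_singleton.preimage hc2)
      · exact isOpen_compl_iff.2 (isClosed_singleton.preimage continuous_snd)
    have hp₀S : (y₀, w₀) ∈ S := ⟨mem_interior_iff_mem_nhds.2 ht, hG₀, hw₀⟩
    obtain ⟨ρ, hρ, hball⟩ := Metric.isOpen_iff.1 hSopen _ hp₀S
    have hVnhds : Metric.ball y₀ (ρ/2) ∩ grad ⁻¹' Metric.ball w₀ (ρ/2) ∈ 𝓝 y₀ := by
      refine Filter.inter_mem (Metric.ball_mem_nhds _ (by linarith)) ?_
      exact hgc.preimage_mem_nhds (Metric.ball_mem_nhds _ (by linarith))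
    refine ⟨_, hVnhds, ρ/2, by linarith, (L:ℝ) + 1, by positivity, ?_⟩
    rintro y ⟨hyK, hyB, hyG⟩ w hwnear
    have hyS : (y, w) ∈ S := by
      apply hball
      rw [Metric.mem_ball, Prod.dist_eq, max_lt_iff]
      constructor
      · exact lt_trans (Metric.mem_ball.1 hyB) (by linarith)
      · have h1 : dist w (grad y) < ρ/2 := by rwa [dist_eq_norm]
        have h2 : dist (grad y) w₀ < ρ/2 := Metric.mem_ball.1 hyG
        calc dist w w₀ ≤ dist w (grad y) + dist (grad y) w₀ := dist_triangle _ _ _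
          _ < ρ := by linarith
    have hyS' : (y, grad y) ∈ S := by
      apply hball
      rw [Metric.mem_ball, Prod.dist_eq, max_lt_iff]
      exact ⟨lt_trans (Metric.mem_ball.1 hyB) (by linarith),
        lt_trans (Metric.mem_ball.1 hyG) (by linarith)⟩
    obtain ⟨hmt, hGne, hwne'⟩ := hyS
    obtain ⟨hmt', hGne', -⟩ := hyS'
    refine ⟨hwne', fun h => absurd h hGne, ?_⟩
    have e1 : zFun n f g q r y w = Z1 n (m (y, w)) := zFun_eq_Z1 f g q r y w hGne
    have e2 : zFun n f g q r y (grad y) = Z1 n (m (y, grad y)) :=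
      zFun_eq_Z1 f g q r y (grad y) hGne'
    have hdist : dist (Z1 n (m (y, w))) (Z1 n (m (y, grad y))) ≤ L * ‖w - grad y‖ := by
      have := hlip.dist_le_mul _ (interior_subset hmt) _ (interior_subset hmt')
      refine le_trans this ?_
      have : dist (m (y, w)) (m (y, grad y)) = ‖w - grad y‖ := by
        rw [hmdef, Prod.dist_eq]
        simp [dist_eq_norm]
      rw [this]
    calc |zFun n f g q r y w - ‖w‖|
        ≤ |zFun n f g q r y w - zFun n f g q r y (grad y)| + |zFun n f g q r y (grad y) - ‖w‖| :=
          abs_sub_le _ _ _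
      _ ≤ L * ‖w - grad y‖ + ‖w - grad y‖ := by
          refine add_le_add ?_ ?_
          · rw [e1, e2, ← Real.dist_eq]; exact hdist
          · rw [hzn y hyK]
            calc |‖grad y‖ - ‖w‖| ≤ ‖grad y - w‖ := abs_norm_sub_norm_le _ _
              _ = ‖w - grad y‖ := norm_sub_rev _ _
      _ = ((L:ℝ) + 1) * ‖w - grad y‖ := by ring

end contdiff

end ZBranch

/-- First-order local truncation bound, relative form: the gradient computed by
the patchy update from the Taylor polynomial `π̄` at the previous patch point
differs from the true gradient by at most `T ‖∇π(y) − ∇π̄(y)‖`. -/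

theorem patchy_first_order_relative_bound (n d : ℕ)
    (K : Set (EuclideanSpace ℝ (Fin n))) (hK : IsCompact K)
    (f g : EuclideanSpace ℝ (Fin n) → EuclideanSpace ℝ (Fin n))
    (q r : EuclideanSpace ℝ (Fin n) → ℝ)
    (hf : Continuous f) (hg : Continuous g) (hq : Continuous q) (hr : Continuous r)
    (hq0 : ∀ x ∈ K, 0 ≤ q x) (hr0 : ∀ x ∈ K, 0 < r x)
    (π : EuclideanSpace ℝ (Fin n) → ℝ)
    (U : Set (EuclideanSpace ℝ (Fin n))) (hUopen : IsOpen U) (hUconv : Convex ℝ U)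
    (hKU : K ⊆ U) (hπ : ContDiffOn ℝ ((d : ℕ∞) + 2) π U)
    -- π solves the HJB equation on U with feedback κ = −(∇π·g)/r
    (hHJB : ∀ x ∈ U,
      ⟪gradient π x, f x + (-(⟪gradient π x, g x⟫ / r x)) • g x⟫ + q x
        + (1 / 2) * r x * (-(⟪gradient π x, g x⟫ / r x)) ^ 2 = 0)
    -- π is a strict Lyapunov function on K
    (hLyap : ∀ x ∈ K,
      ⟪gradient π x, f x + (-(⟪gradient π x, g x⟫ / r x)) • g x⟫ < 0) :
    ∃ h : ℝ, 0 < h ∧ ∃ T : ℝ, ∀ x0 ∈ K, ∀ y ∈ K, ‖y - x0‖ ≤ h →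
      gradient (taylorPoly n d π x0) y ≠ 0 ∧
      (⟪gradient (taylorPoly n d π x0) y, g y⟫ = 0 →
        ⟪gradient (taylorPoly n d π x0) y, f y⟫ ≠ 0) ∧
      ‖gradient π y -
          (zFun n f g q r y (gradient (taylorPoly n d π x0) y) /
            ‖gradient (taylorPoly n d π x0) y‖) • gradient (taylorPoly n d π x0) y‖
        ≤ T * ‖gradient π y - gradient (taylorPoly n d π x0) y‖ := by
  classical
  rcases Set.eq_empty_or_nonempty K with hKe | hKne
  · exact ⟨1, one_pos, 0, fun x0 hx0 => by rw [hKe] at hx0; exact absurd hx0 (Set.notMem_empty _)⟩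
  -- continuity of the gradient of π on U
  have h1le : (1 : WithTop ℕ∞) ≤ ((d : ℕ∞) + 2 : ℕ∞) := by
    exact_mod_cast le_trans one_le_two (le_add_self : (2:ℕ∞) ≤ (d:ℕ∞) + 2)
  have hgradcont : ContinuousOn (gradient π) U := by
    have h1 : ContinuousOn (fderiv ℝ π) U := hπ.continuousOn_fderiv_of_isOpen hUopen h1le
    exact ((InnerProductSpace.toDual ℝ
      (EuclideanSpace ℝ (Fin n))).symm.continuous.comp_continuousOn h1).congr fun x _ => rfl
  -- scalar forms of HJB and Lyapunov
  have hrel : ∀ x ∈ K, ⟪gradient π x, f x⟫ + q x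
      = ⟪gradient π x, g x⟫ ^ 2 / (2 * r x) := by
    intro x hx
    have h := hHJB x (hKU hx)
    rw [inner_add_right, real_inner_smul_right] at h
    set P := (⟪gradient π x, f x⟫ : ℝ)
    set G := (⟪gradient π x, g x⟫ : ℝ)
    have hrx : r x ≠ 0 := (hr0 x hx).ne'
    field_simp at h
    have h2 : (2 * (P + q x) * (r x) - G ^ 2) * (r x ^ 2) = 0 := by linear_combination (r x ^ 2) * h
    have h3 : 2 * (P + q x) * (r x) - G ^ 2 = 0 := by
      rcases mul_eq_zero.1 h2 with h' | h'
      · exact h'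
      · exact absurd h' (pow_ne_zero 2 hrx)
    rw [eq_div_iff (mul_ne_zero two_ne_zero hrx)]
    linarith
  have hLy : ∀ x ∈ K, ⟪gradient π x, f x⟫ - ⟪gradient π x, g x⟫ ^ 2 / r x < 0 := by
    intro x hx
    have h := hLyap x hx
    rw [inner_add_right, real_inner_smul_right] at h
    set P := (⟪gradient π x, f x⟫ : ℝ)
    set G := (⟪gradient π x, g x⟫ : ℝ)
    have : (-(G / r x)) * G = -(G ^ 2 / r x) := by ring
    rw [this] at h
    linarith
  have hwne : ∀ x ∈ K, gradient π x ≠ 0 := by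
    intro x hx h0
    have h := hLyap x hx
    rw [h0] at h
    simp at h
  -- local bounds glued by compactness
  have hloc := fun (y₀ : EuclideanSpace ℝ (Fin n)) (hy₀ : y₀ ∈ K) =>
    local_bound f g q r hf hg hq hr K hq0 hr0 (gradient π) hwne hrel hLy y₀ hy₀
      (hgradcont.continuousAt (hUopen.mem_nhds (hKU hy₀)))
  choose V hV ε hε L hL0 hQ using hloc
  obtain ⟨t, hcover⟩ := hK.elim_nhds_subcover' V hV
  have htne : t.Nonempty := by
    obtain ⟨y1, hy1⟩ := hKne
    obtain ⟨x, hxt, -⟩ := Set.mem_iUnion₂.1 (hcover hy1)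
    exact ⟨x, hxt⟩
  set εm := t.inf' htne (fun x => ε x.1 x.2) with hεmdef
  have hεmpos : 0 < εm := (Finset.lt_inf'_iff htne).2 fun x _ => hε x.1 x.2
  set Lm := t.sup' htne (fun x => L x.1 x.2) with hLmdef
  have hglobal : ∀ y ∈ K, ∀ w : EuclideanSpace ℝ (Fin n), ‖w - gradient π y‖ < εm →
      (w ≠ 0 ∧ (⟪w, g y⟫ = 0 → ⟪w, f y⟫ ≠ 0) ∧
        |zFun n f g q r y w - ‖w‖| ≤ Lm * ‖w - gradient π y‖) := by
    intro y hy w hw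
    obtain ⟨x, hxt, hyV⟩ := Set.mem_iUnion₂.1 (hcover hy)
    have hεle : εm ≤ ε x.1 x.2 := Finset.inf'_le _ hxt
    obtain ⟨h1, h2, h3⟩ := hQ x.1 x.2 y ⟨hy, hyV⟩ w (lt_of_lt_of_le hw hεle)
    refine ⟨h1, h2, le_trans h3 ?_⟩
    exact mul_le_mul_of_nonneg_right (Finset.le_sup' (fun x => L x.1 x.2) hxt) (norm_nonneg _)
  -- uniform closeness of the taylor gradient
  have hTG := continuousOn_gradient_taylorPoly (d := d) π U hUopen ((d : ℕ∞) + 2) le_rfl hπ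
  set F : EuclideanSpace ℝ (Fin n) × EuclideanSpace ℝ (Fin n) → ℝ :=
    fun p => ‖gradient (taylorPoly n d π p.1) p.2 - gradient π p.2‖ with hFdef
  have hFcont : ContinuousOn F (U ×ˢ U) := by
    apply ContinuousOn.norm
    apply ContinuousOn.sub
    · exact hTG.mono (Set.prod_mono subset_rfl (Set.subset_univ _))
    · exact hgradcont.comp continuous_snd.continuousOn fun p hp => hp.2
  have hFdiag : ∀ x ∈ U, F (x, x) = 0 := by
    intro x _
    simp only [hFdef, gradient_taylorPoly_diag, sub_self, norm_zero]
  set A := (K ×ˢ K) ∩ F ⁻¹' (Set.Ici εm) with hAdef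
  have hAclosed : IsClosed A :=
    ContinuousOn.preimage_isClosed_of_isClosed
      (hFcont.mono (Set.prod_mono hKU hKU)) ((hK.prod hK).isClosed) isClosed_Ici
  have hAcomp : IsCompact A := IsCompact.of_isClosed_subset (hK.prod hK) hAclosed
    Set.inter_subset_left
  have hhex : ∃ h : ℝ, 0 < h ∧ ∀ x0 ∈ K, ∀ y ∈ K, ‖y - x0‖ ≤ h → F (x0, y) < εm := by
    rcases Set.eq_empty_or_nonempty A with hAe | hAne
    · refine ⟨1, one_pos, fun x0 hx0 y hy _ => ?_⟩
      by_contra hcon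
      have : (x0, y) ∈ A := ⟨⟨hx0, hy⟩, by simpa using le_of_not_gt hcon⟩
      rw [hAe] at this
      exact absurd this (Set.notMem_empty _)
    · obtain ⟨p, hpA, hpmin⟩ := hAcomp.exists_isMinOn hAne
        ((continuous_snd.sub continuous_fst).norm.continuousOn)
      have hmpos : 0 < ‖p.2 - p.1‖ := by
        rcases eq_or_lt_of_le (norm_nonneg (p.2 - p.1)) with h0 | h0
        · exfalso
          have hp12 : p.2 = p.1 := by
            have := (norm_eq_zero.1 h0.symm)
            exact sub_eq_zero.1 this
          have hεA : εm ≤ F p := hpA.2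
          have : F p = 0 := by
            have hpU : p.1 ∈ U := hKU hpA.1.1
            have : F (p.1, p.2) = F (p.1, p.1) := by rw [hp12]
            rw [show (p.1, p.2) = p from rfl] at this
            rw [this, hFdiag p.1 hpU]
          linarith
        · exact h0
      refine ⟨‖p.2 - p.1‖ / 2, by linarith, fun x0 hx0 y hy hnear => ?_⟩
      by_contra hcon
      have hmem : (x0, y) ∈ A := ⟨⟨hx0, hy⟩, by simpa using le_of_not_gt hcon⟩
      have := hpmin hmem
      simp only [Set.mem_setOf_eq] at this
      have : ‖p.2 - p.1‖ ≤ ‖y - x0‖ := this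
      linarith
  obtain ⟨h, hhpos, hhprop⟩ := hhex
  refine ⟨h, hhpos, Lm + 1, ?_⟩
  intro x0 hx0 y hy hnear
  set w := gradient (taylorPoly n d π x0) y with hwdef
  have hclose : ‖w - gradient π y‖ < εm := hhprop x0 hx0 y hy hnear
  obtain ⟨h1, h2, h3⟩ := hglobal y hy w hclose
  refine ⟨h1, h2, ?_⟩
  set z := zFun n f g q r y w with hzdef
  have hWpos : (0:ℝ) < ‖w‖ := norm_pos_iff.2 h1
  have hsplit : gradient π y - (z / ‖w‖) • w = (gradient π y - w) + ((1 - z / ‖w‖) • w) := by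
    rw [sub_smul, one_smul]; abel
  have hnorm2 : ‖(1 - z / ‖w‖) • w‖ = |‖w‖ - z| := by
    rw [norm_smul, Real.norm_eq_abs]
    have hmul : (1 - z / ‖w‖) * ‖w‖ = ‖w‖ - z := by field_simp
    calc |1 - z / ‖w‖| * ‖w‖ = |1 - z / ‖w‖| * |‖w‖| := by rw [abs_of_pos hWpos]
      _ = |(1 - z / ‖w‖) * ‖w‖| := (abs_mul _ _).symm
      _ = |‖w‖ - z| := by rw [hmul]
  calc ‖gradient π y - (z / ‖w‖) • w‖
      ≤ ‖gradient π y - w‖ + ‖(1 - z / ‖w‖) • w‖ := by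
        rw [hsplit]; exact norm_add_le _ _
    _ = ‖gradient π y - w‖ + |‖w‖ - z| := by rw [hnorm2]
    _ ≤ ‖gradient π y - w‖ + Lm * ‖gradient π y - w‖ := by
        refine add_le_add le_rfl ?_
        rw [abs_sub_comm]
        calc |z - ‖w‖| ≤ Lm * ‖w - gradient π y‖ := h3
          _ = Lm * ‖gradient π y - w‖ := by rw [norm_sub_rev]
    _ = (Lm + 1) * ‖gradient π y - w‖ := by ring
end

section
/- Let K ⊂ ℝⁿ be compact, let f, g : ℝⁿ → ℝⁿ and q, r : ℝⁿ → ℝ be continuous with q ≥ 0 and r > 0 on K, and let π be C¹ on a neighborhood of K and a strict Lyapunov function on K. Define 𝒮 = { x ∈ K : |∇π(x)·g(x)| ≤ √( ½ · (inf_K r) · (inf_{x∈K} |∇π(x)·(f(x)+g(x)κ(x))|) ) }. Let M_Δ > 0 satisfy: M_Δ < inf_{x∈K} ‖∇π(x)‖; M_Δ · sup_{x∈𝒮} ‖f(x)‖ < inf_{x∈𝒮} |∇π(x)·f(x)|; and M_Δ · sup_{x∈K∖𝒮} ‖g(x)‖ < inf_{x∈K∖𝒮} |∇π(x)·g(x)|.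 Then for every x ∈ K and every Δ ∈ ℝⁿ with ‖Δ‖ ≤ M_Δ, the value z(∇π(x)+Δ; x) is well defined, and sup { |z(∇π(x)+Δ; x)| / ‖∇π(x)+Δ‖ : x ∈ K, ‖Δ‖ ≤ M_Δ } < ∞. -/
open scoped BigOperators RealInnerProductSpace

set_option maxHeartbeats 2000000 in
/-- Uniform boundedness of `z(∇π(x)+Δ;x)/‖∇π(x)+Δ‖` over `x ∈ K` and `‖Δ‖ ≤ M_Δ`,
for `M_Δ` satisfying the three smallness conditions. -/
theorem z_over_gradient_bounded (n : ℕ)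
    (K : Set (EuclideanSpace ℝ (Fin n))) (hK : IsCompact K)
    (f g : EuclideanSpace ℝ (Fin n) → EuclideanSpace ℝ (Fin n))
    (q r : EuclideanSpace ℝ (Fin n) → ℝ)
    (hf : Continuous f) (hg : Continuous g) (hq : Continuous q) (hr : Continuous r)
    (hq0 : ∀ x ∈ K, 0 ≤ q x) (hr0 : ∀ x ∈ K, 0 < r x)
    (π : EuclideanSpace ℝ (Fin n) → ℝ)
    (U : Set (EuclideanSpace ℝ (Fin n))) (hUopen : IsOpen U) (hKU : K ⊆ U)
    (hπ : ContDiffOn ℝ 1 π U)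
    -- π is a strict Lyapunov function on K (with feedback κ = −(∇π·g)/r)
    (hLyap : ∀ x ∈ K,
      ⟪gradient π x, f x + (-(⟪gradient π x, g x⟫ / r x)) • g x⟫ < 0)
    -- the set 𝒮
    (S : Set (EuclideanSpace ℝ (Fin n)))
    (hS : S = {x ∈ K | |⟪gradient π x, g x⟫| ≤
      Real.sqrt ((1 / 2) * sInf (r '' K) *
        sInf ((fun x => |⟪gradient π x, f x + (-(⟪gradient π x, g x⟫ / r x)) • g x⟫|) '' K))})
    (MΔ : ℝ) (hMΔ0 : 0 < MΔ)
    (hMΔ1 : MΔ < sInf ((fun x => ‖gradient π x‖) '' K))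
    (hMΔ2 : MΔ * sSup ((fun x => ‖f x‖) '' S) <
      sInf ((fun x => |⟪gradient π x, f x⟫|) '' S))
    (hMΔ3 : MΔ * sSup ((fun x => ‖g x‖) '' (K \ S)) <
      sInf ((fun x => |⟪gradient π x, g x⟫|) '' (K \ S))) :
    (∀ x ∈ K, ∀ Δ : EuclideanSpace ℝ (Fin n), ‖Δ‖ ≤ MΔ →
      gradient π x + Δ ≠ 0 ∧
      (⟪gradient π x + Δ, g x⟫ = 0 → ⟪gradient π x + Δ, f x⟫ ≠ 0)) ∧
    ∃ B : ℝ, ∀ x ∈ K, ∀ Δ : EuclideanSpace ℝ (Fin n), ‖Δ‖ ≤ MΔ →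
      |zFun n f g q r x (gradient π x + Δ)| / ‖gradient π x + Δ‖ ≤ B := by
  classical
  -- nonemptiness
  have hKne : K.Nonempty := by
    by_contra h
    rw [Set.not_nonempty_iff_eq_empty] at h
    simp only [h, Set.image_empty, Real.sInf_empty] at hMΔ1
    linarith
  have hSK : S ⊆ K := by rw [hS]; exact fun x hx => hx.1
  have hSne : S.Nonempty := by
    by_contra h
    rw [Set.not_nonempty_iff_eq_empty] at h
    simp only [h, Set.image_empty, Real.sInf_empty, Real.sSup_empty, mul_zero] at hMΔ2
    exact lt_irrefl 0 hMΔ2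
  have hKSne : (K \ S).Nonempty := by
    by_contra h
    rw [Set.not_nonempty_iff_eq_empty] at h
    simp only [h, Set.image_empty, Real.sInf_empty, Real.sSup_empty, mul_zero] at hMΔ3
    exact lt_irrefl 0 hMΔ3
  -- continuity of the gradient
  have hgradU : ContinuousOn (fun x => gradient π x) U := by
    have h1 : ContinuousOn (fderiv ℝ π) U := hπ.continuousOn_fderiv_of_isOpen hUopen le_rfl
    exact (InnerProductSpace.toDual ℝ
      (EuclideanSpace ℝ (Fin n))).symm.continuous.comp_continuousOn h1
  have hgradK : ContinuousOn (fun x => gradient π x) K := hgradU.mono hKU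
  -- the Lyapunov derivative
  set Vd : EuclideanSpace ℝ (Fin n) → ℝ :=
    fun x => ⟪gradient π x, f x + (-(⟪gradient π x, g x⟫ / r x)) • g x⟫ with hVd
  have hVdc : ContinuousOn Vd K := by
    apply ContinuousOn.inner hgradK
    apply ContinuousOn.add hf.continuousOn
    refine ContinuousOn.smul (f := fun t => -(⟪gradient π t, g t⟫ / r t)) ?_ hg.continuousOn
    exact ((ContinuousOn.inner hgradK hg.continuousOn).div hr.continuousOn
      (fun x hx => (hr0 x hx).ne')).neg
  -- inf of r and of |Vd| over K are attained and positive
  obtain ⟨xr, hxrK, hxrmin⟩ := hK.exists_isMinOn hKne hr.continuousOn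
  have hrKbddB : BddBelow (r '' K) := (hK.image_of_continuousOn hr.continuousOn).bddBelow
  have hrinf_le : ∀ x ∈ K, sInf (r '' K) ≤ r x := fun x hx =>
    csInf_le hrKbddB ⟨x, hx, rfl⟩
  have hrinf_pos : 0 < sInf (r '' K) := by
    have h1 : r xr ≤ sInf (r '' K) :=
      le_csInf (hKne.image r) (by rintro y ⟨z, hz, rfl⟩; exact hxrmin hz)
    exact lt_of_lt_of_le (hr0 xr hxrK) h1
  obtain ⟨xv, hxvK, hxvmin⟩ := hK.exists_isMinOn hKne hVdc.abs
  set mV := sInf ((fun x => |Vd x|) '' K) with hmV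
  have hmV_le : ∀ x ∈ K, mV ≤ |Vd x| := fun x hx =>
    csInf_le ⟨0, by rintro y ⟨z, hz, rfl⟩; exact abs_nonneg _⟩ ⟨x, hx, rfl⟩
  have hmV_pos : 0 < mV := by
    have h1 : |Vd xv| ≤ mV :=
      le_csInf (hKne.image _) (by rintro y ⟨z, hz, rfl⟩; exact hxvmin hz)
    have h2 : Vd xv < 0 := hLyap xv hxvK
    exact lt_of_lt_of_le (abs_pos.mpr h2.ne) h1
  -- on S, ⟪∇π, f⟫ is negative
  have hSfneg : ∀ x ∈ S, ⟪gradient π x, f x⟫ ≤ -(mV / 2) := by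
    intro x hx
    have hxK : x ∈ K := hSK hx
    have hxb : |⟪gradient π x, g x⟫| ≤ Real.sqrt ((1 / 2) * sInf (r '' K) * mV) := by
      rw [hS] at hx; exact hx.2
    have hb0 : (0:ℝ) ≤ (1 / 2) * sInf (r '' K) * mV := by positivity
    have hsq : ⟪gradient π x, g x⟫ ^ 2 ≤ (1 / 2) * sInf (r '' K) * mV := by
      have := pow_le_pow_left₀ (abs_nonneg _) hxb 2
      rwa [sq_abs, Real.sq_sqrt hb0] at this
    have hVdx : Vd x ≤ -mV := by
      have h1 := hmV_le x hxK
      have h2 : Vd x < 0 := hLyap x hxK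
      rw [abs_of_neg h2] at h1
      linarith
    have hexp : Vd x = ⟪gradient π x, f x⟫ - ⟪gradient π x, g x⟫ ^ 2 / r x := by
      rw [hVd]
      simp only [inner_add_right, real_inner_smul_right]
      ring
    have hrx : 0 < r x := hr0 x hxK
    have h3 : ⟪gradient π x, g x⟫ ^ 2 / r x ≤ mV / 2 := by
      rw [div_le_iff₀ hrx]
      have h4 : sInf (r '' K) ≤ r x := hrinf_le x hxK
      nlinarith [hmV_pos.le]
    linarith [hexp ▸ hVdx]
  -- bounds from images over K
  have bddA : ∀ (φ : EuclideanSpace ℝ (Fin n) → ℝ), ContinuousOn φ K →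
      BddAbove (φ '' K) := fun φ hφ => (hK.image_of_continuousOn hφ).bddAbove
  have hfmax : ∀ x ∈ K, ‖f x‖ ≤ sSup ((fun x => ‖f x‖) '' K) := fun x hx =>
    le_csSup (bddA _ hf.norm.continuousOn) ⟨x, hx, rfl⟩
  have hgmax : ∀ x ∈ K, ‖g x‖ ≤ sSup ((fun x => ‖g x‖) '' K) := fun x hx =>
    le_csSup (bddA _ hg.norm.continuousOn) ⟨x, hx, rfl⟩
  have hqmax : ∀ x ∈ K, q x ≤ sSup (q '' K) := fun x hx =>
    le_csSup (bddA _ hq.continuousOn) ⟨x, hx, rfl⟩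
  have hrmax : ∀ x ∈ K, r x ≤ sSup (r '' K) := fun x hx =>
    le_csSup (bddA _ hr.continuousOn) ⟨x, hx, rfl⟩
  have hGmax : ∀ x ∈ K, ‖gradient π x‖ ≤ sSup ((fun x => ‖gradient π x‖) '' K) :=
    fun x hx => le_csSup (bddA _ hgradK.norm) ⟨x, hx, rfl⟩
  set fmax := sSup ((fun x => ‖f x‖) '' K)
  set gmax := sSup ((fun x => ‖g x‖) '' K)
  set qmax := sSup (q '' K)
  set rmax := sSup (r '' K)
  set Gmax := sSup ((fun x => ‖gradient π x‖) '' K)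
  have hqmax0 : 0 ≤ qmax := le_trans (hq0 _ hKne.some_mem) (hqmax _ hKne.some_mem)
  have hrmax0 : 0 < rmax := lt_of_lt_of_le (hr0 _ hKne.some_mem) (hrmax _ hKne.some_mem)
  have hfmax0 : 0 ≤ fmax := le_trans (norm_nonneg _) (hfmax _ hKne.some_mem)
  have hgmax0 : 0 ≤ gmax := le_trans (norm_nonneg _) (hgmax _ hKne.some_mem)
  have hGmax0 : 0 ≤ Gmax := le_trans (norm_nonneg _) (hGmax _ hKne.some_mem)
  -- lower bound for ‖w‖ and its positivity
  set c0 := sInf ((fun x => ‖gradient π x‖) '' K) - MΔ with hc0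
  have hc0pos : 0 < c0 := by rw [hc0]; linarith
  have hwlow : ∀ x ∈ K, ∀ Δ : EuclideanSpace ℝ (Fin n), ‖Δ‖ ≤ MΔ →
      c0 ≤ ‖gradient π x + Δ‖ := by
    intro x hx Δ hΔ
    have h1 : sInf ((fun x => ‖gradient π x‖) '' K) ≤ ‖gradient π x‖ :=
      csInf_le ⟨0, by rintro y ⟨z, hz, rfl⟩; exact norm_nonneg _⟩ ⟨x, hx, rfl⟩
    have h2 : ‖gradient π x‖ - ‖Δ‖ ≤ ‖gradient π x + Δ‖ := by
      have h3 := norm_add_le (gradient π x + Δ) (-Δ)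
      rw [add_neg_cancel_right, norm_neg] at h3
      linarith
    rw [hc0]; linarith
  have hwup : ∀ x ∈ K, ∀ Δ : EuclideanSpace ℝ (Fin n), ‖Δ‖ ≤ MΔ →
      ‖gradient π x + Δ‖ ≤ Gmax + MΔ := by
    intro x hx Δ hΔ
    calc ‖gradient π x + Δ‖ ≤ ‖gradient π x‖ + ‖Δ‖ := norm_add_le _ _
    _ ≤ Gmax + MΔ := add_le_add (hGmax x hx) hΔ
  -- the constants on S
  set cf := sInf ((fun x => |⟪gradient π x, f x⟫|) '' S) -
    MΔ * sSup ((fun x => ‖f x‖) '' S) with hcf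
  have hcfpos : 0 < cf := by rw [hcf]; linarith
  have hwfS : ∀ x ∈ S, ∀ Δ : EuclideanSpace ℝ (Fin n), ‖Δ‖ ≤ MΔ →
      ⟪gradient π x + Δ, f x⟫ ≤ -cf := by
    intro x hx Δ hΔ
    have h1 : sInf ((fun x => |⟪gradient π x, f x⟫|) '' S) ≤ |⟪gradient π x, f x⟫| :=
      csInf_le ⟨0, by rintro y ⟨z, hz, rfl⟩; exact abs_nonneg _⟩ ⟨x, hx, rfl⟩
    have hneg : ⟪gradient π x, f x⟫ ≤ -(mV / 2) := hSfneg x hx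
    have h1' : ⟪gradient π x, f x⟫ ≤ -sInf ((fun x => |⟪gradient π x, f x⟫|) '' S) := by
      rw [abs_of_neg (by linarith : ⟪gradient π x, f x⟫ < 0)] at h1
      linarith
    have h2 : ‖f x‖ ≤ sSup ((fun x => ‖f x‖) '' S) :=
      le_csSup (BddAbove.mono (Set.image_mono hSK) (bddA _ hf.norm.continuousOn))
        ⟨x, hx, rfl⟩
    have h3 : ⟪Δ, f x⟫ ≤ MΔ * sSup ((fun x => ‖f x‖) '' S) :=
      le_trans (real_inner_le_norm Δ (f x))
        (mul_le_mul hΔ h2 (norm_nonneg _) hMΔ0.le)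
    have h4 : ⟪gradient π x + Δ, f x⟫ = ⟪gradient π x, f x⟫ + ⟪Δ, f x⟫ :=
      inner_add_left _ _ _
    rw [hcf]; linarith
  -- the constants on K \ S
  set cg := sInf ((fun x => |⟪gradient π x, g x⟫|) '' (K \ S)) -
    MΔ * sSup ((fun x => ‖g x‖) '' (K \ S)) with hcg
  have hcgpos : 0 < cg := by rw [hcg]; linarith
  have hwgKS : ∀ x ∈ K \ S, ∀ Δ : EuclideanSpace ℝ (Fin n), ‖Δ‖ ≤ MΔ →
      cg ≤ |⟪gradient π x + Δ, g x⟫| := by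
    intro x hx Δ hΔ
    have h1 : sInf ((fun x => |⟪gradient π x, g x⟫|) '' (K \ S)) ≤ |⟪gradient π x, g x⟫| :=
      csInf_le ⟨0, by rintro y ⟨z, hz, rfl⟩; exact abs_nonneg _⟩ ⟨x, hx, rfl⟩
    have h2 : ‖g x‖ ≤ sSup ((fun x => ‖g x‖) '' (K \ S)) :=
      le_csSup (BddAbove.mono (Set.image_mono Set.diff_subset)
        (bddA _ hg.norm.continuousOn)) ⟨x, hx, rfl⟩
    have h3 : |⟪Δ, g x⟫| ≤ MΔ * sSup ((fun x => ‖g x‖) '' (K \ S)) :=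
      le_trans (abs_real_inner_le_norm Δ (g x))
        (mul_le_mul hΔ h2 (norm_nonneg _) hMΔ0.le)
    have h4 : ⟪gradient π x + Δ, g x⟫ = ⟪gradient π x, g x⟫ + ⟪Δ, g x⟫ :=
      inner_add_left _ _ _
    have h5 : |⟪gradient π x, g x⟫| - |⟪Δ, g x⟫| ≤ |⟪gradient π x, g x⟫ + ⟪Δ, g x⟫| := by
      have := abs_sub_abs_le_abs_sub (⟪gradient π x, g x⟫) (-(⟪Δ, g x⟫))
      rw [abs_neg, sub_neg_eq_add] at this
      linarith
    rw [hcg, h4]; linarith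
  -- PART 1
  constructor
  · intro x hx Δ hΔ
    refine ⟨fun h0 => ?_, fun hb => ?_⟩
    · have := hwlow x hx Δ hΔ
      rw [h0, norm_zero] at this
      linarith
    · by_cases hxS : x ∈ S
      · have := hwfS x hxS Δ hΔ
        intro h; rw [h] at this; linarith
      · have := hwgKS x ⟨hx, hxS⟩ Δ hΔ
        rw [hb, abs_zero] at this
        linarith
  -- PART 2
  · set Dmax := fmax ^ 2 + 2 * (qmax / sInf (r '' K)) * gmax ^ 2 with hDmax
    set B2 := rmax * (fmax + Real.sqrt Dmax) * (Gmax + MΔ) / cg ^ 2 with hB2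
    refine ⟨max (qmax / cf) B2, ?_⟩
    intro x hx Δ hΔ
    set w := gradient π x + Δ with hw
    have hW : 0 < ‖w‖ := lt_of_lt_of_le hc0pos (hwlow x hx Δ hΔ)
    have hfa : |⟪w, f x⟫| ≤ ‖w‖ * ‖f x‖ := abs_real_inner_le_norm _ _
    have hga : |⟪w, g x⟫| ≤ ‖w‖ * ‖g x‖ := abs_real_inner_le_norm _ _
    have hrx : 0 < r x := hr0 x hx
    have hqx : 0 ≤ q x := hq0 x hx
    by_cases hxS : x ∈ S
    · -- case x ∈ S : bound by qmax / cf
      have haneg : ⟪w, f x⟫ ≤ -cf := hwfS x hxS Δ hΔ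
      have ha : cf ≤ |⟪w, f x⟫| := by rw [abs_of_neg (by linarith)]; linarith
      have key : |zFun n f g q r x w| / ‖w‖ ≤ q x / |⟪w, f x⟫| := by
        by_cases hb : ⟪w, g x⟫ = 0
        · rw [zFun, if_pos hb, abs_div, abs_neg, abs_of_nonneg hqx, abs_div,
            abs_of_pos hW, div_div, div_mul_cancel₀ _ hW.ne']
        · rw [zFun, if_neg hb]
          set fn := ⟪w, f x⟫ / ‖w‖ with hfn
          set gn := ⟪w, g x⟫ / ‖w‖ with hgn
          have hfn_neg : fn < 0 := div_neg_of_neg_of_pos (by linarith) hW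
          have hgnne : gn ≠ 0 := div_ne_zero hb hW.ne'
          have hgn2 : (0:ℝ) < gn ^ 2 :=
            lt_of_le_of_ne (sq_nonneg gn) (Ne.symm (pow_ne_zero 2 hgnne))
          have hD0 : (0:ℝ) ≤ fn ^ 2 + 2 * (q x / r x) * gn ^ 2 := by positivity
          set D := fn ^ 2 + 2 * (q x / r x) * gn ^ 2 with hD
          have hsf : -fn ≤ Real.sqrt D := by
            have h1 : Real.sqrt (fn ^ 2) ≤ Real.sqrt D := by
              apply Real.sqrt_le_sqrt
              rw [hD]
              linarith [mul_nonneg (mul_nonneg zero_le_two (div_nonneg hqx hrx.le))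
                (sq_nonneg gn)]
            rwa [Real.sqrt_sq_eq_abs, abs_of_neg hfn_neg] at h1
          have hz0 : 0 ≤ r x * (fn + Real.sqrt D) / gn ^ 2 := by
            apply div_nonneg _ hgn2.le
            apply mul_nonneg hrx.le
            linarith
          have hden : 0 < r x * (-fn) := mul_pos hrx (neg_pos.mpr hfn_neg)
          have hE' : Real.sqrt D ≤ (q x * gn ^ 2 + r x * fn ^ 2) / (r x * (-fn)) := by
            have h2 : D ≤ ((q x * gn ^ 2 + r x * fn ^ 2) / (r x * (-fn))) ^ 2 := by
              rw [div_pow, le_div_iff₀ (by positivity)]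
              have hexp : D * (r x * (-fn)) ^ 2 =
                  (r x * fn ^ 2 + 2 * q x * gn ^ 2) * (r x * fn ^ 2) := by
                rw [hD]; field_simp
              rw [hexp]
              nlinarith [sq_nonneg (q x * gn ^ 2), sq_nonneg (r x * fn ^ 2)]
            calc Real.sqrt D
                ≤ Real.sqrt (((q x * gn ^ 2 + r x * fn ^ 2) / (r x * (-fn))) ^ 2) :=
                  Real.sqrt_le_sqrt h2
              _ = (q x * gn ^ 2 + r x * fn ^ 2) / (r x * (-fn)) :=
                  Real.sqrt_sq (by positivity)
          have h3 : Real.sqrt D * (r x * (-fn)) ≤ q x * gn ^ 2 + r x * fn ^ 2 :=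
            (le_div_iff₀ hden).mp hE'
          have hz_le : r x * (fn + Real.sqrt D) / gn ^ 2 ≤ q x / (-fn) := by
            rw [div_le_div_iff₀ hgn2 (neg_pos.mpr hfn_neg)]
            have h4 : r x * (fn + Real.sqrt D) * (-fn) =
                Real.sqrt D * (r x * (-fn)) - r x * fn ^ 2 := by ring
            rw [h4]; linarith
          rw [abs_of_nonneg hz0]
          have h5 : r x * (fn + Real.sqrt D) / gn ^ 2 / ‖w‖ ≤ q x / (-fn) / ‖w‖ :=
            (div_le_div_iff_of_pos_right hW).mpr hz_le
          have h6 : q x / (-fn) / ‖w‖ = q x / |⟪w, f x⟫| := by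
            rw [abs_of_neg (show ⟪w, f x⟫ < 0 by linarith), div_div]
            congr 1
            rw [hfn]
            field_simp
          rw [← h6]
          exact h5
      have key2 : q x / |⟪w, f x⟫| ≤ qmax / cf :=
        div_le_div₀ hqmax0 (hqmax x hx) hcfpos ha
      exact le_trans (le_trans key key2) (le_max_left _ _)
    · -- case x ∈ K \ S : bound by B2
      have hxKS : x ∈ K \ S := ⟨hx, hxS⟩
      have hb : ⟪w, g x⟫ ≠ 0 := by
        intro h; have := hwgKS x hxKS Δ hΔ; rw [h, abs_zero] at this; linarith
      have hbl : cg ≤ |⟪w, g x⟫| := hwgKS x hxKS Δ hΔ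
      rw [zFun, if_neg hb]
      set fn := ⟪w, f x⟫ / ‖w‖ with hfn
      set gn := ⟪w, g x⟫ / ‖w‖ with hgn
      have hgnne : gn ≠ 0 := div_ne_zero hb hW.ne'
      have hgn2 : (0:ℝ) < gn ^ 2 :=
        lt_of_le_of_ne (sq_nonneg gn) (Ne.symm (pow_ne_zero 2 hgnne))
      have hfn_le : |fn| ≤ fmax := by
        rw [hfn, abs_div, abs_of_pos hW, div_le_iff₀ hW]
        exact hfa.trans (by nlinarith [hfmax x hx, norm_nonneg (f x)])
      have hgn_le : |gn| ≤ gmax := by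
        rw [hgn, abs_div, abs_of_pos hW, div_le_iff₀ hW]
        exact hga.trans (by nlinarith [hgmax x hx, norm_nonneg (g x)])
      have hDle : fn ^ 2 + 2 * (q x / r x) * gn ^ 2 ≤ Dmax := by
        have h1 : fn ^ 2 ≤ fmax ^ 2 := by
          rw [← sq_abs]; exact pow_le_pow_left₀ (abs_nonneg _) hfn_le 2
        have h2 : gn ^ 2 ≤ gmax ^ 2 := by
          rw [← sq_abs]; exact pow_le_pow_left₀ (abs_nonneg _) hgn_le 2
        have h3 : q x / r x ≤ qmax / sInf (r '' K) :=
          div_le_div₀ hqmax0 (hqmax x hx) hrinf_pos (hrinf_le x hx)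
        have h5 : q x / r x * gn ^ 2 ≤ qmax / sInf (r '' K) * gmax ^ 2 :=
          mul_le_mul h3 h2 (sq_nonneg gn) (by positivity)
        rw [hDmax]; linarith
      have hsqrtle : Real.sqrt (fn ^ 2 + 2 * (q x / r x) * gn ^ 2) ≤ Real.sqrt Dmax :=
        Real.sqrt_le_sqrt hDle
      have hnum : |r x * (fn + Real.sqrt (fn ^ 2 + 2 * (q x / r x) * gn ^ 2))| ≤
          rmax * (fmax + Real.sqrt Dmax) := by
        rw [abs_mul, abs_of_pos hrx]
        apply mul_le_mul (hrmax x hx) _ (abs_nonneg _) hrmax0.le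
        calc |fn + Real.sqrt (fn ^ 2 + 2 * (q x / r x) * gn ^ 2)|
            ≤ |fn| + |Real.sqrt (fn ^ 2 + 2 * (q x / r x) * gn ^ 2)| := abs_add_le _ _
          _ ≤ fmax + Real.sqrt Dmax := by
              rw [abs_of_nonneg (Real.sqrt_nonneg _)]
              exact add_le_add hfn_le hsqrtle
      have hzeq : |r x * (fn + Real.sqrt (fn ^ 2 + 2 * (q x / r x) * gn ^ 2)) / gn ^ 2| / ‖w‖ =
          |r x * (fn + Real.sqrt (fn ^ 2 + 2 * (q x / r x) * gn ^ 2))| / (gn ^ 2 * ‖w‖) := by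
        rw [abs_div, abs_of_pos hgn2, div_div]
      have hWup' : ‖w‖ ≤ Gmax + MΔ := hwup x hx Δ hΔ
      have hcg2 : cg ^ 2 ≤ ⟪w, g x⟫ ^ 2 := by
        rw [← sq_abs ⟪w, g x⟫]
        exact pow_le_pow_left₀ hcgpos.le hbl 2
      have hden_lb : cg ^ 2 / (Gmax + MΔ) ≤ gn ^ 2 * ‖w‖ := by
        have h7 : gn ^ 2 * ‖w‖ = ⟪w, g x⟫ ^ 2 / ‖w‖ := by
          rw [hgn, div_pow]
          field_simp
        rw [h7]
        exact div_le_div₀ (sq_nonneg _) hcg2 hW hWup'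
      have hGMpos : 0 < Gmax + MΔ := by linarith
      have hfinal : |r x * (fn + Real.sqrt (fn ^ 2 + 2 * (q x / r x) * gn ^ 2))| /
          (gn ^ 2 * ‖w‖) ≤ (rmax * (fmax + Real.sqrt Dmax)) / (cg ^ 2 / (Gmax + MΔ)) :=
        div_le_div₀
          (mul_nonneg hrmax0.le (add_nonneg hfmax0 (Real.sqrt_nonneg _)))
          hnum (div_pos (pow_pos hcgpos 2) hGMpos) hden_lb
      have hBeq : (rmax * (fmax + Real.sqrt Dmax)) / (cg ^ 2 / (Gmax + MΔ)) = B2 := by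
        rw [hB2, div_div_eq_mul_div]
      rw [hzeq]
      exact le_trans (hfinal.trans hBeq.le) (le_max_right _ _)
end

section
/- Suppose v and v̂ are nonzero vectors in ℝⁿ with v·v̂ > 0. Then there exist orthonormal bases {V¹,…,Vⁿ} and {V̂¹,…,V̂ⁿ} of ℝⁿ such that: (1) V¹ = v/‖v‖ and V̂¹ = v̂/‖v̂‖; (2) Σ_{j=2}^n (V¹·V̂^j)² = Σ_{j=2}^n (V̂¹·V^j)² = 1 − (V¹·V̂¹)²; (3) V^j·V̂^k = 0 whenever 2 ≤ j,k ≤ n and j ≠ k, and V¹·V̂¹ ≤ V^j·V̂^j ≤ 1 for all 2 ≤ j ≤ n. -/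
open scoped BigOperators RealInnerProductSpace

set_option maxHeartbeats 1000000 in
/-- Given nonzero `v, v̂` with `v·v̂ > 0`, there are orthonormal bases `V, V̂` of `ℝⁿ`
(`n = m+1 ≥ 1`) whose first vectors are `v/‖v‖` and `v̂/‖v̂‖`, whose remaining vectors
are biorthogonal, with `Σ_{j≠0} (V⁰·V̂ʲ)² = Σ_{j≠0} (V̂⁰·Vʲ)² = 1 − (V⁰·V̂⁰)²` and
`V⁰·V̂⁰ ≤ Vʲ·V̂ʲ ≤ 1` for `j ≠ 0`. -/
theorem canonical_bases_exist (m : ℕ)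
    (v vh : EuclideanSpace ℝ (Fin (m + 1))) (hv : v ≠ 0) (hvh : vh ≠ 0)
    (hpos : 0 < ⟪v, vh⟫) :
    ∃ V Vh : OrthonormalBasis (Fin (m + 1)) ℝ (EuclideanSpace ℝ (Fin (m + 1))),
      V 0 = ‖v‖⁻¹ • v ∧ Vh 0 = ‖vh‖⁻¹ • vh ∧
      (∑ j ∈ Finset.univ.filter (fun j : Fin (m + 1) => j ≠ 0), ⟪V 0, Vh j⟫ ^ 2
        = 1 - ⟪V 0, Vh 0⟫ ^ 2) ∧
      (∑ j ∈ Finset.univ.filter (fun j : Fin (m + 1) => j ≠ 0), ⟪Vh 0, V j⟫ ^ 2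
        = 1 - ⟪V 0, Vh 0⟫ ^ 2) ∧
      (∀ j k : Fin (m + 1), j ≠ 0 → k ≠ 0 → j ≠ k → ⟪V j, Vh k⟫ = 0) ∧
      (∀ j : Fin (m + 1), j ≠ 0 → ⟪V 0, Vh 0⟫ ≤ ⟪V j, Vh j⟫ ∧ ⟪V j, Vh j⟫ ≤ 1) := by
  classical
  have hcard : Module.finrank ℝ (EuclideanSpace ℝ (Fin (m + 1)))
      = Fintype.card (Fin (m + 1)) := by simp
  obtain ⟨u, hu_def⟩ : ∃ u : EuclideanSpace ℝ (Fin (m + 1)), u = ‖v‖⁻¹ • v := ⟨_, rfl⟩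
  obtain ⟨w, hw_def⟩ : ∃ w : EuclideanSpace ℝ (Fin (m + 1)), w = ‖vh‖⁻¹ • vh := ⟨_, rfl⟩
  have hun : ‖u‖ = 1 := by rw [hu_def]; exact norm_smul_inv_norm hv
  have hwn : ‖w‖ = 1 := by rw [hw_def]; exact norm_smul_inv_norm hvh
  have huu : ⟪u, u⟫ = 1 := by rw [real_inner_self_eq_norm_sq, hun]; norm_num
  have hww : ⟪w, w⟫ = 1 := by rw [real_inner_self_eq_norm_sq, hwn]; norm_num
  have hc_pos : 0 < ⟪u, w⟫ := by
    rw [hu_def, hw_def, real_inner_smul_left, real_inner_smul_right]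
    have h1 : (0:ℝ) < ‖v‖ := norm_pos_iff.mpr hv
    have h2 : (0:ℝ) < ‖vh‖ := norm_pos_iff.mpr hvh
    positivity
  by_cases hcase : w = u
  · -- Case 1: the normalized vectors coincide; use one basis twice.
    have horth : Orthonormal ℝ (Set.restrict ({0} : Set (Fin (m+1))) (fun _ => u)) := by
      rw [orthonormal_iff_ite]
      rintro ⟨i, hi⟩ ⟨j, hj⟩
      simp only [Set.mem_singleton_iff] at hi hj
      have : (⟨i, hi⟩ : ({0} : Set (Fin (m+1)))) = ⟨j, hj⟩ := by
        apply Subtype.ext; simp [hi, hj]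
      simp [this, huu, hun, Set.restrict_apply, Set.restrict]
    obtain ⟨V, hV⟩ := horth.exists_orthonormalBasis_extension_of_card_eq hcard
    have hV0 : V 0 = u := hV 0 rfl
    have hon := orthonormal_iff_ite.mp V.orthonormal
    refine ⟨V, V, by rw [hV0, hu_def], by rw [hV0, ← hcase, hw_def], ?_, ?_, ?_, ?_⟩
    · rw [hon 0 0]
      have : ∀ j ∈ Finset.univ.filter (fun j : Fin (m+1) => j ≠ 0),
          ⟪V 0, V j⟫ ^ 2 = 0 := by
        intro j hj
        simp only [Finset.mem_filter] at hj
        rw [hon 0 j, if_neg (Ne.symm hj.2)]; ring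
      rw [Finset.sum_congr rfl this]
      simp
    · rw [hon 0 0]
      have : ∀ j ∈ Finset.univ.filter (fun j : Fin (m+1) => j ≠ 0),
          ⟪V 0, V j⟫ ^ 2 = 0 := by
        intro j hj
        simp only [Finset.mem_filter] at hj
        rw [hon 0 j, if_neg (Ne.symm hj.2)]; ring
      rw [Finset.sum_congr rfl this]
      simp
    · intro j k _ _ hjk
      rw [hon j k, if_neg hjk]
    · intro j _
      rw [hon 0 0, hon j j]
      simp
  · -- Case 2: the normalized vectors differ.
    obtain ⟨c, hc_def⟩ : ∃ c : ℝ, c = ⟪u, w⟫ := ⟨_, rfl⟩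
    have huw : ⟪u, w⟫ = c := hc_def.symm
    have hwu : ⟪w, u⟫ = c := by rw [real_inner_comm]; exact huw
    have hc_pos' : 0 < c := hc_def ▸ hc_pos
    have hc_le : c ≤ 1 := by
      have := real_inner_le_norm u w
      rw [hun, hwn, huw] at this; simpa using this
    have hc_lt : c < 1 := by
      rcases lt_or_eq_of_le hc_le with h | h
      · exact h
      · rw [h] at huw
        exact absurd ((inner_eq_one_iff_of_norm_eq_one hun hwn).mp huw).symm hcase
    obtain ⟨s, hs_def⟩ : ∃ s : ℝ, s = Real.sqrt (1 - c^2) := ⟨_, rfl⟩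
    have hs_pos : 0 < s := by
      rw [hs_def]; apply Real.sqrt_pos.mpr; nlinarith
    have hs_sq : s ^ 2 = 1 - c ^ 2 := by
      rw [hs_def]; exact Real.sq_sqrt (by nlinarith)
    obtain ⟨e, he_def⟩ : ∃ e : EuclideanSpace ℝ (Fin (m + 1)),
        e = s⁻¹ • (w - c • u) := ⟨_, rfl⟩
    have hue : ⟪u, e⟫ = 0 := by
      rw [he_def]
      simp only [real_inner_smul_right, inner_sub_right, real_inner_smul_right, huu, huw]
      ring
    have heu : ⟪e, u⟫ = 0 := by rw [real_inner_comm]; exact hue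
    have hee : ⟪e, e⟫ = 1 := by
      rw [he_def]
      simp only [real_inner_smul_left, real_inner_smul_right, inner_sub_left, inner_sub_right,
        huu, hww, huw, hwu]
      have hs : s ≠ 0 := ne_of_gt hs_pos
      field_simp
      nlinarith [hs_sq]
    have hwe : ⟪w, e⟫ = s := by
      rw [he_def]
      simp only [real_inner_smul_right, inner_sub_right, real_inner_smul_right, hww, hwu]
      have hs : s ≠ 0 := ne_of_gt hs_pos
      field_simp
      nlinarith [hs_sq]
    have hew : ⟪e, w⟫ = s := by rw [real_inner_comm]; exact hwe
    have hdecomp : w = c • u + s • e := by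
      rw [he_def, smul_smul, mul_inv_cancel₀ (ne_of_gt hs_pos), one_smul]
      abel
    -- the pair (u, e) is orthonormal, so the dimension is at least 2
    have hpair : Orthonormal ℝ (![u, e]) := by
      rw [orthonormal_iff_ite]
      intro i j
      fin_cases i <;> fin_cases j <;>
        simp [huu, hee, hue, heu, hun, (by nlinarith [real_inner_self_eq_norm_sq e, norm_nonneg e, hee] : ‖e‖ = 1)]
    have hm : 1 ≤ m := by
      have h2 : Fintype.card (Fin 2) ≤ Module.finrank ℝ (EuclideanSpace ℝ (Fin (m + 1))) :=
        hpair.linearIndependent.fintype_card_le_finrank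
      rw [hcard] at h2
      simp only [Fintype.card_fin] at h2
      omega
    have h01 : (0 : Fin (m+1)) ≠ 1 := by
      simp [Fin.ext_iff, Fin.val_one']
      omega
    -- extend (u, e) to an orthonormal basis V
    obtain ⟨f, hf_def⟩ : ∃ f : Fin (m+1) → EuclideanSpace ℝ (Fin (m + 1)),
        f = fun i => if i = 0 then u else e := ⟨_, rfl⟩
    have horth : Orthonormal ℝ (Set.restrict ({0, 1} : Set (Fin (m+1))) f) := by
      rw [orthonormal_iff_ite]
      rintro ⟨i, hi⟩ ⟨j, hj⟩
      simp only [Set.mem_insert_iff, Set.mem_singleton_iff] at hi hj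
      rcases hi with hi | hi <;> rcases hj with hj | hj <;>
        subst hi <;> subst hj <;>
        simp [hf_def, Subtype.ext_iff, h01, Ne.symm h01, huu, hee, hue, heu, hun, (by nlinarith [real_inner_self_eq_norm_sq e, norm_nonneg e, hee] : ‖e‖ = 1), Set.restrict_apply, Set.restrict]
    obtain ⟨V, hV⟩ := horth.exists_orthonormalBasis_extension_of_card_eq hcard
    have hV0 : V 0 = u := by
      have := hV 0 (by simp); simpa [hf_def] using this
    have hV1 : V 1 = e := by
      have := hV 1 (by simp); simpa [hf_def, Ne.symm h01] using this
    have hon := orthonormal_iff_ite.mp V.orthonormal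
    have hVu : ∀ i : Fin (m+1), i ≠ 0 → i ≠ 1 → ⟪V i, u⟫ = 0 := by
      intro i h0 h1
      rw [← hV0, hon i 0, if_neg h0]
    have hVe : ∀ i : Fin (m+1), i ≠ 0 → i ≠ 1 → ⟪V i, e⟫ = 0 := by
      intro i h0 h1
      rw [← hV1, hon i 1, if_neg h1]
    have huV : ∀ i : Fin (m+1), i ≠ 0 → i ≠ 1 → ⟪u, V i⟫ = 0 := by
      intro i h0 h1; rw [real_inner_comm]; exact hVu i h0 h1
    have heV : ∀ i : Fin (m+1), i ≠ 0 → i ≠ 1 → ⟪e, V i⟫ = 0 := by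
      intro i h0 h1; rw [real_inner_comm]; exact hVe i h0 h1
    -- the rotated family g
    obtain ⟨e', he'_def⟩ : ∃ e' : EuclideanSpace ℝ (Fin (m + 1)),
        e' = (-s) • u + c • e := ⟨_, rfl⟩
    obtain ⟨g, hg_def⟩ : ∃ g : Fin (m+1) → EuclideanSpace ℝ (Fin (m + 1)),
        g = fun i => if i = 0 then w else if i = 1 then e' else V i := ⟨_, rfl⟩
    have hg0 : g 0 = w := by simp [hg_def]
    have hg1 : g 1 = e' := by simp [hg_def, Ne.symm h01]
    have hgother : ∀ i : Fin (m+1), i ≠ 0 → i ≠ 1 → g i = V i := by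
      intro i h0 h1; simp [hg_def, h0, h1]
    have hue' : ⟪u, e'⟫ = -s := by
      rw [he'_def, inner_add_right, real_inner_smul_right, real_inner_smul_right, huu, hue]; ring
    have hee' : ⟪e, e'⟫ = c := by
      rw [he'_def, inner_add_right, real_inner_smul_right, real_inner_smul_right, heu, hee]; ring
    have hwe' : ⟪w, e'⟫ = 0 := by
      rw [hdecomp, inner_add_left, real_inner_smul_left, real_inner_smul_left, hue', hee']
      ring
    have he'e' : ⟪e', e'⟫ = 1 := by
      rw [he'_def]
      simp only [inner_add_left, inner_add_right, real_inner_smul_left, real_inner_smul_right,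
        huu, hee, hue, heu]
      nlinarith [hs_sq]
    have hVw : ∀ i : Fin (m+1), i ≠ 0 → i ≠ 1 → ⟪V i, w⟫ = 0 := by
      intro i h0 h1
      rw [hdecomp, inner_add_right, real_inner_smul_right, real_inner_smul_right,
        hVu i h0 h1, hVe i h0 h1]
      ring
    have hVe' : ∀ i : Fin (m+1), i ≠ 0 → i ≠ 1 → ⟪V i, e'⟫ = 0 := by
      intro i h0 h1
      rw [he'_def, inner_add_right, real_inner_smul_right, real_inner_smul_right,
        hVu i h0 h1, hVe i h0 h1]
      ring
    have hgon : Orthonormal ℝ g := by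
      rw [orthonormal_iff_ite]
      intro i j
      by_cases hi0 : i = 0 <;> by_cases hj0 : j = 0
      · subst hi0; subst hj0; simp [hg0, hww, hwn]
      · subst hi0
        by_cases hj1 : j = 1
        · subst hj1; rw [hg0, hg1, if_neg (Ne.symm hj0), hwe']
        · rw [hg0, hgother j hj0 hj1, if_neg (Ne.symm hj0), real_inner_comm, hVw j hj0 hj1]
      · subst hj0
        by_cases hi1 : i = 1
        · subst hi1; rw [hg1, hg0, if_neg hi0, real_inner_comm, hwe']
        · rw [hg0, hgother i hi0 hi1, if_neg hi0, hVw i hi0 hi1]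
      · by_cases hi1 : i = 1 <;> by_cases hj1 : j = 1
        · subst hi1; subst hj1; simp [hg1, he'e', (by nlinarith [real_inner_self_eq_norm_sq e', norm_nonneg e', he'e'] : ‖e'‖ = 1)]
        · subst hi1
          rw [hg1, hgother j hj0 hj1, if_neg (Ne.symm hj1), real_inner_comm, hVe' j hj0 hj1]
        · subst hj1
          rw [hg1, hgother i hi0 hi1, if_neg hi1, hVe' i hi0 hi1]
        · rw [hgother i hi0 hi1, hgother j hj0 hj1, hon i j]
    have hgspan : ⊤ ≤ Submodule.span ℝ (Set.range g) := by
      apply ge_of_eq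
      exact hgon.linearIndependent.span_eq_top_of_card_eq_finrank hcard.symm
    obtain ⟨Vh, hVhi⟩ : ∃ Vh : OrthonormalBasis (Fin (m+1)) ℝ (EuclideanSpace ℝ (Fin (m + 1))),
        ∀ i, Vh i = g i := by
      refine ⟨OrthonormalBasis.mk hgon hgspan, fun i => ?_⟩
      rw [OrthonormalBasis.coe_mk]
    refine ⟨V, Vh, by rw [hV0, hu_def], by rw [hVhi 0, hg0, hw_def], ?_, ?_, ?_, ?_⟩
    · rw [hVhi 0, hg0, hV0, huw]
      rw [Finset.sum_eq_single_of_mem 1 (by simp [Ne.symm h01])]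
      · rw [hVhi 1, hg1, hue', neg_sq]; exact hs_sq
      · intro j hj hj1
        simp only [Finset.mem_filter] at hj
        rw [hVhi j, hgother j hj.2 hj1, huV j hj.2 hj1]
        ring
    · rw [hVhi 0, hg0, hV0, huw]
      rw [Finset.sum_eq_single_of_mem 1 (by simp [Ne.symm h01])]
      · rw [hV1, hwe]; exact hs_sq
      · intro j hj hj1
        simp only [Finset.mem_filter] at hj
        rw [real_inner_comm, hVw j hj.2 hj1]
        ring
    · intro j k hj0 hk0 hjk
      by_cases hj1 : j = 1
      · subst hj1
        have hk1 : k ≠ 1 := Ne.symm hjk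
        rw [hV1, hVhi k, hgother k hk0 hk1, heV k hk0 hk1]
      · by_cases hk1 : k = 1
        · subst hk1
          rw [hVhi 1, hg1, hVe' j hj0 hj1]
        · rw [hVhi k, hgother k hk0 hk1, hon j k, if_neg hjk]
    · intro j hj0
      rw [hVhi 0, hg0, hV0, huw]
      by_cases hj1 : j = 1
      · subst hj1
        rw [hV1, hVhi 1, hg1, hee']
        exact ⟨le_refl c, le_of_lt hc_lt⟩
      · rw [hVhi j, hgother j hj0 hj1, hon j j, if_pos rfl]
        exact ⟨hc_le, le_refl 1⟩
end

section
/- Let V and V̂ be orthogonal n×n real matrices with columns V¹,…,Vⁿ and V̂¹,…,V̂ⁿ such that V^j·V̂^k = 0 whenever 2 ≤ j,k ≤ n and j ≠ k, and V¹·V̂¹ ≤ V^j·V̂^j for all 2 ≤ j ≤ n. Then ‖I − V̂ᵀV‖₂ ≤ 2√2 · √(1 − V¹·V̂¹). -/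
open scoped BigOperators Matrix

/-- The spectral norm (operator `2`-norm) of a real square matrix. -/
noncomputable def specNorm {ι : Type*} [Fintype ι] [DecidableEq ι]
    (A : Matrix ι ι ℝ) : ℝ :=
  ‖Matrix.toEuclideanCLM (𝕜 := ℝ) A‖

lemma specNorm_le_of_forall {n : Type*} [Fintype n] [DecidableEq n]
    (A : Matrix n n ℝ) (C : ℝ) (hC : 0 ≤ C)
    (h : ∀ x : n → ℝ, ∑ i, (∑ j, A i j * x j)^2 ≤ C^2 * ∑ j, (x j)^2) :
    specNorm A ≤ C := by
  refine ContinuousLinearMap.opNorm_le_bound _ hC fun x => ?_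
  have hx : ∀ i, (Matrix.toEuclideanCLM (𝕜 := ℝ) A x) i = ∑ j, A i j * x j := by
    intro i
    have := Matrix.ofLp_toEuclideanCLM (𝕜 := ℝ) A x
    have h2 : (WithLp.equiv 2 _ ((Matrix.toEuclideanCLM (𝕜 := ℝ) A) x)) i
        = (Matrix.toLin' A (WithLp.equiv 2 _ x)) i := congrFun this i
    simpa [Matrix.toLin'_apply, Matrix.mulVec, dotProduct] using h2
  rw [EuclideanSpace.norm_eq, EuclideanSpace.norm_eq]
  rw [show (C * Real.sqrt (∑ i, ‖x i‖^2)) = Real.sqrt (C^2 * ∑ i, ‖x i‖^2) by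
    rw [Real.sqrt_mul (by positivity), Real.sqrt_sq hC]]
  apply Real.sqrt_le_sqrt
  simpa [hx, Real.norm_eq_abs, sq_abs] using h x

lemma specNorm_add_le {n : Type*} [Fintype n] [DecidableEq n] (A B : Matrix n n ℝ) :
    specNorm (A + B) ≤ specNorm A + specNorm B := by
  unfold specNorm; rw [map_add]; exact norm_add_le _ _

lemma specNorm_diagonal_le {n : Type*} [Fintype n] [DecidableEq n]
    (d : n → ℝ) (C : ℝ) (hC : 0 ≤ C) (h : ∀ i, |d i| ≤ C) :
    specNorm (Matrix.diagonal d) ≤ C := by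
  refine specNorm_le_of_forall _ C hC fun x => ?_
  have : ∀ i, (∑ j, Matrix.diagonal d i j * x j) = d i * x i := by
    intro i; simp [Matrix.diagonal]
  rw [Finset.mul_sum]
  simp only [this]
  refine Finset.sum_le_sum fun i _ => ?_
  have h1 : (d i)^2 ≤ C^2 := by
    have := h i; nlinarith [abs_nonneg (d i), sq_abs (d i)]
  nlinarith [sq_nonneg (x i)]

lemma specNorm_arrow_le (m : ℕ) (r c : Fin (m+1) → ℝ) (_hr0 : r 0 = 0) (hc0 : c 0 = 0)
    (s : ℝ) (hr : ∑ k, r k ^ 2 ≤ s) (hc : ∑ j, c j ^ 2 ≤ s) :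
    specNorm (Matrix.of fun j k : Fin (m+1) =>
      if j = 0 then r k else if k = 0 then c j else 0) ≤ Real.sqrt (2*s) := by
  have hs : 0 ≤ s := le_trans (Finset.sum_nonneg fun i _ => sq_nonneg _) hr
  refine specNorm_le_of_forall _ _ (Real.sqrt_nonneg _) fun x => ?_
  rw [Real.sq_sqrt (by positivity)]
  rw [Fin.sum_univ_succ]
  have h0 : (∑ j, (Matrix.of fun j k : Fin (m+1) =>
      if j = 0 then r k else if k = 0 then c j else 0) 0 j * x j) = ∑ j, r j * x j := by
    simp
  have hsucc : ∀ i : Fin m, (∑ j, (Matrix.of fun j k : Fin (m+1) =>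
      if j = 0 then r k else if k = 0 then c j else 0) i.succ j * x j) = c i.succ * x 0 := by
    intro i
    simp [Fin.succ_ne_zero, Finset.sum_ite_eq']
  simp only [h0, hsucc]
  have hx0 : (x 0)^2 ≤ ∑ j, (x j)^2 :=
    Finset.single_le_sum (fun i _ => sq_nonneg (x i)) (Finset.mem_univ 0)
  have hCS : (∑ j, r j * x j)^2 ≤ s * ∑ j, (x j)^2 := by
    calc (∑ j, r j * x j)^2 ≤ (∑ j, r j ^2) * ∑ j, (x j)^2 :=
          Finset.sum_mul_sq_le_sq_mul_sq _ _ _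
      _ ≤ s * ∑ j, (x j)^2 := by
          apply mul_le_mul_of_nonneg_right hr (Finset.sum_nonneg fun i _ => sq_nonneg _)
  have hC : (∑ i : Fin m, (c i.succ * x 0)^2) ≤ s * (x 0)^2 := by
    have : (∑ i : Fin m, (c i.succ * x 0)^2) = (∑ i : Fin m, c i.succ ^2) * (x 0)^2 := by
      rw [Finset.sum_mul]; congr 1; ext i; ring
    rw [this]
    have h2 : (∑ i : Fin m, c i.succ ^2) = ∑ j, c j ^2 := by
      rw [Fin.sum_univ_succ, hc0]; ring_nf
    rw [h2]
    exact mul_le_mul_of_nonneg_right hc (sq_nonneg _)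
  have : s * (x 0)^2 ≤ s * ∑ j, (x j)^2 := mul_le_mul_of_nonneg_left hx0 hs
  nlinarith

/-- If `V, V̂` are orthogonal with biorthogonal non-first columns satisfying
`V⁰·V̂⁰ ≤ Vʲ·V̂ʲ`, then `‖I − V̂ᵀV‖₂ ≤ 2√2 √(1 − V⁰·V̂⁰)`. -/
theorem id_sub_VhT_V_bound (m : ℕ)
    (V Vh : Matrix (Fin (m + 1)) (Fin (m + 1)) ℝ)
    (hV : Vᵀ * V = 1) (hVh : Vhᵀ * Vh = 1)
    (hortho : ∀ j k : Fin (m + 1), j ≠ 0 → k ≠ 0 → j ≠ k →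
      (∑ i, V i j * Vh i k) = 0)
    (hdiag : ∀ j : Fin (m + 1), j ≠ 0 →
      (∑ i, V i 0 * Vh i 0) ≤ ∑ i, V i j * Vh i j) :
    specNorm (1 - Vhᵀ * V) ≤
      2 * Real.sqrt 2 * Real.sqrt (1 - ∑ i, V i 0 * Vh i 0) := by
  set d0 := ∑ i, V i 0 * Vh i 0 with hd0def
  set W := Vhᵀ * V with hWdef
  have hWe : ∀ j k, W j k = ∑ i, Vh i j * V i k := fun j k => by
    simp [hWdef, Matrix.mul_apply, Matrix.transpose_apply]
  have hVVt : V * Vᵀ = 1 := mul_eq_one_comm.mp hV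
  have hVhVht : Vh * Vhᵀ = 1 := mul_eq_one_comm.mp hVh
  have hWWt : W * Wᵀ = 1 := by
    rw [hWdef, Matrix.transpose_mul, Matrix.transpose_transpose,
      Matrix.mul_assoc, ← Matrix.mul_assoc V, hVVt, Matrix.one_mul, hVh]
  have hWtW : Wᵀ * W = 1 := by
    rw [hWdef, Matrix.transpose_mul, Matrix.transpose_transpose,
      Matrix.mul_assoc, ← Matrix.mul_assoc Vh, hVhVht, Matrix.one_mul, hV]
  have hrow : ∑ k, (W 0 k)^2 = 1 := by
    have h := congrArg (fun M => M 0 0) hWWt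
    simp only [Matrix.mul_apply, Matrix.transpose_apply, Matrix.one_apply_eq] at h
    rw [← h]; exact Finset.sum_congr rfl fun k _ => (sq (W 0 k)).symm ▸ rfl
  have hcol : ∀ k, ∑ j, (W j k)^2 = 1 := by
    intro k
    have h := congrArg (fun M => M k k) hWtW
    simp only [Matrix.mul_apply, Matrix.transpose_apply, Matrix.one_apply_eq] at h
    rw [← h]; exact Finset.sum_congr rfl fun j _ => by ring
  have hW00 : W 0 0 = d0 := by
    rw [hWe, hd0def]; exact Finset.sum_congr rfl fun i _ => mul_comm _ _
  have hdiag' : ∀ j : Fin (m+1), j ≠ 0 → d0 ≤ W j j := by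
    intro j hj
    rw [hWe]
    calc d0 ≤ ∑ i, V i j * Vh i j := hdiag j hj
      _ = ∑ i, Vh i j * V i j := Finset.sum_congr rfl fun i _ => mul_comm _ _
  have hzero : ∀ j k : Fin (m+1), j ≠ 0 → k ≠ 0 → j ≠ k → W j k = 0 := by
    intro j k hj hk hjk
    rw [hWe]
    rw [show (∑ i, Vh i j * V i k) = ∑ i, V i k * Vh i j from
      Finset.sum_congr rfl fun i _ => mul_comm _ _]
    exact hortho k j hk hj (Ne.symm hjk)
  have hd0sq : d0^2 ≤ 1 := by
    rw [← hW00, ← hrow]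
    exact Finset.single_le_sum (f := fun k => (W 0 k)^2) (fun i _ => sq_nonneg _) (Finset.mem_univ 0)
  have hd0le : d0 ≤ 1 := by nlinarith [sq_nonneg (d0 - 1)]
  have hd0ge : -1 ≤ d0 := by nlinarith [sq_nonneg (d0 + 1)]
  have hWjj : ∀ j, W j j ≤ 1 := by
    intro j
    have h1 : (W j j)^2 ≤ 1 := by
      rw [← hcol j]
      exact Finset.single_le_sum (f := fun i => (W i j)^2) (fun i _ => sq_nonneg _) (Finset.mem_univ j)
    nlinarith [sq_nonneg (W j j - 1)]
  -- row 0 / column 0 off-diagonal mass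
  set r : Fin (m+1) → ℝ := fun k => if k = 0 then 0 else -W 0 k with hrdef
  set c : Fin (m+1) → ℝ := fun j => if j = 0 then 0 else -W j 0 with hcdef
  have hrsum : ∑ k, r k ^ 2 = 1 - d0^2 := by
    have h1 : ∀ k, r k ^ 2 = (W 0 k)^2 - (if k = 0 then d0^2 else 0) := by
      intro k; by_cases hk : k = 0 <;> simp [hrdef, hk, hW00, neg_sq]
    rw [Finset.sum_congr rfl fun k _ => h1 k, Finset.sum_sub_distrib, hrow]
    simp
  have hcsum : ∑ j, c j ^ 2 = 1 - d0^2 := by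
    have h1 : ∀ j, c j ^ 2 = (W j 0)^2 - (if j = 0 then d0^2 else 0) := by
      intro j; by_cases hj : j = 0 <;> simp [hcdef, hj, hW00, neg_sq]
    rw [Finset.sum_congr rfl fun j _ => h1 j, Finset.sum_sub_distrib, hcol 0]
    simp
  -- decomposition
  have heq : (1 : Matrix (Fin (m+1)) (Fin (m+1)) ℝ) - W =
      Matrix.diagonal (fun j => 1 - W j j) +
      Matrix.of (fun j k : Fin (m+1) => if j = 0 then r k else if k = 0 then c j else 0) := by
    ext j k
    simp only [Matrix.sub_apply, Matrix.one_apply, Matrix.add_apply,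
      Matrix.diagonal_apply, Matrix.of_apply]
    by_cases hjk : j = k
    · subst hjk
      by_cases hj : j = 0 <;> simp [hj, hrdef]
    · by_cases hj : j = 0
      · subst hj
        have hk : k ≠ 0 := fun h => hjk h.symm
        simp [hjk, hk, hrdef, Ne.symm hjk]
      · by_cases hk : k = 0
        · subst hk; simp [hjk, hj, hcdef, Ne.symm hjk]
        · simp [hjk, hj, hk, Ne.symm hjk, hzero j k hj hk hjk]
  -- bounds
  have hbD : specNorm (Matrix.diagonal (fun j : Fin (m+1) => 1 - W j j)) ≤ 1 - d0 := by
    refine specNorm_diagonal_le _ _ (by linarith) fun i => ?_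
    rw [abs_le]
    constructor
    · have := hWjj i; linarith
    · by_cases hi : i = 0
      · subst hi; rw [hW00]
      · have := hdiag' i hi; linarith
  have hbN : specNorm (Matrix.of (fun j k : Fin (m+1) =>
      if j = 0 then r k else if k = 0 then c j else 0)) ≤ Real.sqrt (2*(1-d0^2)) := by
    refine specNorm_arrow_le m r c (by simp [hrdef]) (by simp [hcdef]) _ hrsum.le hcsum.le
  have hmain : specNorm (1 - W) ≤ (1 - d0) + Real.sqrt (2*(1-d0^2)) := by
    rw [heq]
    exact le_trans (specNorm_add_le _ _) (add_le_add hbD hbN)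
  -- arithmetic
  have hs : (0:ℝ) ≤ 1 - d0 := by linarith
  have ht : (0:ℝ) ≤ 1 + d0 := by linarith
  have e1 : Real.sqrt (2*(1-d0^2)) =
      Real.sqrt 2 * (Real.sqrt (1-d0) * Real.sqrt (1+d0)) := by
    rw [show 2*(1-d0^2) = 2*((1-d0)*(1+d0)) by ring, Real.sqrt_mul (by norm_num),
      Real.sqrt_mul hs]
  have hs2 := Real.sq_sqrt hs
  have ht2 := Real.sq_sqrt ht
  have h22 := Real.sq_sqrt (by norm_num : (0:ℝ) ≤ 2)
  have key : Real.sqrt (1-d0) + Real.sqrt 2 * Real.sqrt (1+d0) ≤ 2 * Real.sqrt 2 := by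
    have h1 : (Real.sqrt (1-d0) + Real.sqrt 2 * Real.sqrt (1+d0))^2 ≤ 8 := by
      nlinarith [sq_nonneg (Real.sqrt 2 * Real.sqrt (1-d0) - Real.sqrt (1+d0)),
        Real.sqrt_nonneg 2, Real.sqrt_nonneg (1-d0), Real.sqrt_nonneg (1+d0)]
    have h2 := Real.sqrt_le_sqrt h1
    rw [Real.sqrt_sq (by positivity)] at h2
    rw [show (8:ℝ) = 2^2*2 by norm_num, Real.sqrt_mul (by positivity),
      Real.sqrt_sq (by norm_num : (0:ℝ) ≤ 2)] at h2
    exact h2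
  calc specNorm (1 - W) ≤ (1 - d0) + Real.sqrt (2*(1-d0^2)) := hmain
    _ = Real.sqrt (1-d0) * (Real.sqrt (1-d0) + Real.sqrt 2 * Real.sqrt (1+d0)) := by
        rw [e1]; nlinarith [hs2]
    _ ≤ Real.sqrt (1-d0) * (2 * Real.sqrt 2) :=
        mul_le_mul_of_nonneg_left key (Real.sqrt_nonneg _)
    _ = 2 * Real.sqrt 2 * Real.sqrt (1 - d0) := by ring
end

section
/- Suppose v ∈ ℝⁿ is nonzero and v̂ ∈ ℝⁿ satisfies ‖v − v̂‖₂ < ‖v‖₂. Then there exist orthogonal n×n matrices V and V̂ whose first columns are v/‖v‖ and v̂/‖v̂‖ respectively, such that ‖I − V̂ᵀV‖₂ ≤ 4‖v − v̂‖ / (‖v‖ − ‖v − v̂‖). -/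
open scoped BigOperators Matrix
open Finset

lemma specNorm_le_frob {n : ℕ} (A : Matrix (Fin n) (Fin n) ℝ) :
    specNorm A ≤ Real.sqrt (∑ i, ∑ j, A i j ^ 2) := by
  apply ContinuousLinearMap.opNorm_le_bound _ (Real.sqrt_nonneg _)
  intro x
  have hx : ∀ i, (Matrix.toEuclideanCLM (𝕜 := ℝ) A x) i = ∑ j, A i j * x j := fun i => rfl
  rw [EuclideanSpace.norm_eq, EuclideanSpace.norm_eq, ← Real.sqrt_mul (by positivity)]
  apply Real.sqrt_le_sqrt
  simp only [hx, Real.norm_eq_abs, sq_abs]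
  calc ∑ i, (∑ j, A i j * x j) ^ 2
      ≤ ∑ i, (∑ j, A i j ^ 2) * (∑ j, (x j) ^ 2) := by
        exact Finset.sum_le_sum fun i _ => Finset.sum_mul_sq_le_sq_mul_sq _ _ _
    _ = (∑ i, ∑ j, A i j ^ 2) * ∑ j, (x j) ^ 2 := by rw [Finset.sum_mul]

noncomputable def rotMat {m : ℕ} (a : Fin (m + 1) → ℝ) :
    Matrix (Fin (m + 1)) (Fin (m + 1)) ℝ :=
  Matrix.of fun i j =>
    if j = 0 then a i
    else if i = 0 then -a j
    else (if i = j then 1 else 0) - (1 + a 0)⁻¹ * a i * a j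

lemma sum_E_ite {m : ℕ} (j : Fin (m + 1)) (hj : j ≠ 0) (f : Fin (m + 1) → ℝ) :
    ∑ k ∈ univ.erase 0, (if k = j then 1 else 0) * f k = f j := by
  simp only [ite_mul, one_mul, zero_mul]
  rw [Finset.sum_ite_eq' (univ.erase 0) j f, if_pos (by simp [hj])]

lemma rotMat_orth {m : ℕ} (a : Fin (m + 1) → ℝ) (h1 : ∑ k, a k ^ 2 = 1)
    (hc : 1 + a 0 ≠ 0) : (rotMat a)ᵀ * rotMat a = 1 := by
  have ht : ∑ k ∈ univ.erase 0, a k ^ 2 = 1 - a 0 ^ 2 := by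
    have h := Finset.add_sum_erase univ (fun k => a k ^ 2) (mem_univ (0 : Fin (m+1)))
    rw [h1] at h; linarith
  ext i j
  rw [Matrix.mul_apply, Matrix.one_apply,
    ← Finset.add_sum_erase univ _ (mem_univ (0 : Fin (m+1)))]
  simp only [Matrix.transpose_apply]
  rcases eq_or_ne i 0 with hi | hi
  · rcases eq_or_ne j 0 with hj | hj
    · subst hi; subst hj
      have h2 : ∑ k ∈ univ.erase 0, rotMat a k 0 * rotMat a k 0
          = ∑ k ∈ univ.erase 0, a k ^ 2 := by
        refine Finset.sum_congr rfl fun k hk => ?_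
        simp [rotMat, sq]
      rw [h2, ht]
      simp [rotMat]
      ring
    · subst hi
      have h2 : ∑ k ∈ univ.erase 0, rotMat a k 0 * rotMat a k j
          = ∑ k ∈ univ.erase 0,
            ((if k = j then 1 else 0) * a k - ((1 + a 0)⁻¹ * a j) * a k ^ 2) := by
        refine Finset.sum_congr rfl fun k hk => ?_
        have hk0 : k ≠ 0 := (mem_erase.mp hk).1
        simp [rotMat, hj, hk0]
        split_ifs <;> ring
      rw [h2, Finset.sum_sub_distrib, sum_E_ite j hj, ← Finset.mul_sum, ht]
      simp [rotMat, hj, Ne.symm hj]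
      field_simp [hc]
      ring
  · rcases eq_or_ne j 0 with hj | hj
    · subst hj
      have h2 : ∑ k ∈ univ.erase 0, rotMat a k i * rotMat a k 0
          = ∑ k ∈ univ.erase 0,
            ((if k = i then 1 else 0) * a k - ((1 + a 0)⁻¹ * a i) * a k ^ 2) := by
        refine Finset.sum_congr rfl fun k hk => ?_
        have hk0 : k ≠ 0 := (mem_erase.mp hk).1
        simp [rotMat, hi, hk0]
        split_ifs <;> ring
      rw [h2, Finset.sum_sub_distrib, sum_E_ite i hi, ← Finset.mul_sum, ht]
      simp [rotMat, hi, Ne.symm hi]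
      field_simp [hc]
      ring
    · have h2 : ∑ k ∈ univ.erase 0, rotMat a k i * rotMat a k j
          = ∑ k ∈ univ.erase 0,
            ((if k = i then 1 else 0) * ((if k = j then 1 else 0) - (1 + a 0)⁻¹ * a k * a j)
              - (if k = j then 1 else 0) * ((1 + a 0)⁻¹ * a i * a k)
              + ((1 + a 0)⁻¹ * a i) * ((1 + a 0)⁻¹ * a j) * a k ^ 2) := by
        refine Finset.sum_congr rfl fun k hk => ?_
        have hk0 : k ≠ 0 := (mem_erase.mp hk).1
        simp [rotMat, hi, hj, hk0]
        split_ifs <;> ring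
      rw [h2, Finset.sum_add_distrib, Finset.sum_sub_distrib, sum_E_ite i hi,
        sum_E_ite j hj, ← Finset.mul_sum, ht]
      simp [rotMat, hi, hj, Ne.symm hi, Ne.symm hj]
      rcases eq_or_ne i j with hij | hij
      · rw [if_pos hij, hij]
        field_simp [hc]
        ring
      · rw [if_neg hij]
        field_simp [hc]
        ring

lemma rotMat_frob {m : ℕ} (a : Fin (m + 1) → ℝ) (h1 : ∑ k, a k ^ 2 = 1)
    (hc : 1 + a 0 ≠ 0) :
    ∑ i, ∑ j, ((1 : Matrix (Fin (m + 1)) (Fin (m + 1)) ℝ) i j - rotMat a j i) ^ 2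
      = 4 * (1 - a 0) := by
  have ht : ∑ k ∈ univ.erase 0, a k ^ 2 = 1 - a 0 ^ 2 := by
    have h := Finset.add_sum_erase univ (fun k => a k ^ 2) (mem_univ (0 : Fin (m+1)))
    rw [h1] at h; linarith
  have hrow0 : ∑ j, ((1 : Matrix (Fin (m + 1)) (Fin (m + 1)) ℝ) 0 j - rotMat a j 0) ^ 2
      = (1 - a 0) ^ 2 + (1 - a 0 ^ 2) := by
    rw [← Finset.add_sum_erase univ _ (mem_univ (0 : Fin (m+1)))]
    have h2 : ∑ j ∈ univ.erase 0,
        ((1 : Matrix (Fin (m + 1)) (Fin (m + 1)) ℝ) 0 j - rotMat a j 0) ^ 2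
        = ∑ j ∈ univ.erase 0, a j ^ 2 := by
      refine Finset.sum_congr rfl fun j hj => ?_
      have hj0 : j ≠ 0 := (mem_erase.mp hj).1
      simp [rotMat, Matrix.one_apply, Ne.symm hj0]
    rw [h2, ht]
    simp [rotMat, Matrix.one_apply]
  have hrow : ∀ i ∈ univ.erase (0 : Fin (m+1)),
      ∑ j, ((1 : Matrix (Fin (m + 1)) (Fin (m + 1)) ℝ) i j - rotMat a j i) ^ 2
        = a i ^ 2 + a i ^ 2 * (((1 + a 0)⁻¹) ^ 2 * (1 - a 0 ^ 2)) := by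
    intro i hi
    have hi0 : i ≠ 0 := (mem_erase.mp hi).1
    rw [← Finset.add_sum_erase univ _ (mem_univ (0 : Fin (m+1)))]
    have h2 : ∑ j ∈ univ.erase 0,
        ((1 : Matrix (Fin (m + 1)) (Fin (m + 1)) ℝ) i j - rotMat a j i) ^ 2
        = ∑ j ∈ univ.erase 0, (((1 + a 0)⁻¹) ^ 2 * a i ^ 2) * a j ^ 2 := by
      refine Finset.sum_congr rfl fun j hj => ?_
      have hj0 : j ≠ 0 := (mem_erase.mp hj).1
      rcases eq_or_ne i j with hij | hij
      · subst hij
        simp [rotMat, Matrix.one_apply, hi0]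
        field_simp [hc]
        try ring
      · simp [rotMat, Matrix.one_apply, hi0, hj0, hij, Ne.symm hij]
        field_simp [hc]
        try ring
    rw [h2, ← Finset.mul_sum, ht]
    simp [rotMat, Matrix.one_apply, hi0]
    try ring
  have hsum : ∑ i ∈ univ.erase (0 : Fin (m+1)),
      (a i ^ 2 + a i ^ 2 * (((1 + a 0)⁻¹) ^ 2 * (1 - a 0 ^ 2)))
      = (1 - a 0 ^ 2) + (1 - a 0 ^ 2) * (((1 + a 0)⁻¹) ^ 2 * (1 - a 0 ^ 2)) := by
    rw [Finset.sum_add_distrib, ← Finset.sum_mul, ht]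
  rw [← Finset.add_sum_erase univ _ (mem_univ (0 : Fin (m+1))), hrow0,
    Finset.sum_congr rfl hrow, hsum]
  field_simp [hc]
  ring


/-- If `v ≠ 0` and `‖v − v̂‖ < ‖v‖`, there are orthogonal matrices `V, V̂` with first
columns `v/‖v‖` and `v̂/‖v̂‖` such that `‖I − V̂ᵀV‖₂ ≤ 4‖v − v̂‖/(‖v‖ − ‖v − v̂‖)`. -/
theorem canonical_matrices_id_diff_bound (m : ℕ)
    (v vh : EuclideanSpace ℝ (Fin (m + 1))) (hv : v ≠ 0)
    (hclose : ‖v - vh‖ < ‖v‖) :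
    ∃ V Vh : Matrix (Fin (m + 1)) (Fin (m + 1)) ℝ,
      Vᵀ * V = 1 ∧ Vhᵀ * Vh = 1 ∧
      (∀ i, V i 0 = v i / ‖v‖) ∧ (∀ i, Vh i 0 = vh i / ‖vh‖) ∧
      specNorm (1 - Vhᵀ * V) ≤ 4 * ‖v - vh‖ / (‖v‖ - ‖v - vh‖) := by
  have hnv : 0 < ‖v‖ := norm_pos_iff.mpr hv
  have hd0 : 0 ≤ ‖v - vh‖ := norm_nonneg _
  have hnh : 0 < ‖vh‖ := by
    rcases eq_or_ne vh 0 with h | h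
    · subst h; simp at hclose
    · exact norm_pos_iff.mpr h
  set u : EuclideanSpace ℝ (Fin (m + 1)) := ‖v‖⁻¹ • v with hu_def
  set uh : EuclideanSpace ℝ (Fin (m + 1)) := ‖vh‖⁻¹ • vh with huh_def
  have hu1 : ‖u‖ = 1 := by
    rw [hu_def, norm_smul, norm_inv, norm_norm, inv_mul_cancel₀ hnv.ne']
  have huh1 : ‖uh‖ = 1 := by
    rw [huh_def, norm_smul, norm_inv, norm_norm, inv_mul_cancel₀ hnh.ne']
  -- distance between normalized vectors
  have key : ‖u - uh‖ ≤ 2 * ‖v - vh‖ / ‖v‖ := by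
    have e1 : u - uh = (‖v‖⁻¹ • (v - vh)) + ((‖v‖⁻¹ - ‖vh‖⁻¹) • vh) := by
      rw [hu_def, huh_def]; module
    have e2 : |‖v‖⁻¹ - ‖vh‖⁻¹| * ‖vh‖ ≤ ‖v - vh‖ / ‖v‖ := by
      have h4 : |‖vh‖ - ‖v‖| ≤ ‖v - vh‖ := by
        calc |‖vh‖ - ‖v‖| ≤ ‖vh - v‖ := abs_norm_sub_norm_le vh v
          _ = ‖v - vh‖ := norm_sub_rev vh v
      have h3 : |‖v‖⁻¹ - ‖vh‖⁻¹| * ‖vh‖ = |‖vh‖ - ‖v‖| / ‖v‖ := by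
        rw [show ‖v‖⁻¹ - ‖vh‖⁻¹ = (‖vh‖ - ‖v‖) / (‖v‖ * ‖vh‖) by field_simp,
          abs_div, abs_of_pos (mul_pos hnv hnh)]
        field_simp
        try ring
      rw [h3]
      gcongr
    calc ‖u - uh‖ ≤ ‖‖v‖⁻¹ • (v - vh)‖ + ‖(‖v‖⁻¹ - ‖vh‖⁻¹) • vh‖ := by
          rw [e1]; exact norm_add_le _ _
      _ = ‖v‖⁻¹ * ‖v - vh‖ + |‖v‖⁻¹ - ‖vh‖⁻¹| * ‖vh‖ := by
          rw [norm_smul, norm_smul]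
          simp [abs_of_pos (inv_pos.mpr hnv), Real.norm_eq_abs]
      _ ≤ ‖v - vh‖ / ‖v‖ + ‖v - vh‖ / ‖v‖ := by
          rw [inv_mul_eq_div]
          exact add_le_add le_rfl e2
      _ = 2 * ‖v - vh‖ / ‖v‖ := by ring
  -- orthonormal basis with first vector u
  have hon : Orthonormal ℝ (({0} : Set (Fin (m+1))).restrict (fun _ => u)) := by
    constructor
    · intro i; exact hu1
    · intro i j hij
      have h1 := i.2; have h2 := j.2
      simp only [Set.mem_singleton_iff] at h1 h2
      exact absurd (Subtype.ext (h1.trans h2.symm)) hij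
  obtain ⟨b, hb⟩ := hon.exists_orthonormalBasis_extension_of_card_eq (by simp)
  have hb0 : b 0 = u := hb 0 rfl
  set a : Fin (m + 1) → ℝ := fun k => b.repr uh k with ha_def
  have h1 : ∑ k, a k ^ 2 = 1 := by
    have h := EuclideanSpace.norm_eq (b.repr uh)
    rw [LinearIsometryEquiv.norm_map, huh1] at h
    have h' := congrArg (· ^ 2) h.symm
    simp only [Real.sq_sqrt (by positivity : (0:ℝ) ≤ ∑ i, ‖b.repr uh i‖ ^ 2)] at h'
    simpa [Real.norm_eq_abs, sq_abs] using h'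
  have hc0 : a 0 = inner ℝ u uh := by
    rw [ha_def]
    simp only [OrthonormalBasis.repr_apply_apply, hb0]
  have hdelta : ‖u - uh‖ ^ 2 = 2 - 2 * a 0 := by
    rw [hc0, norm_sub_sq_real, hu1, huh1]; ring
  have hdlt : ‖u - uh‖ < 2 := by
    calc ‖u - uh‖ ≤ 2 * ‖v - vh‖ / ‖v‖ := key
      _ < 2 := by rw [div_lt_iff₀ hnv]; linarith
  have hc : 1 + a 0 ≠ 0 := by
    have : 0 < 1 + a 0 := by nlinarith [norm_nonneg (u - uh)]
    exact this.ne'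
  -- the matrices
  set R : Matrix (Fin (m+1)) (Fin (m+1)) ℝ := rotMat a with hR_def
  set V : Matrix (Fin (m+1)) (Fin (m+1)) ℝ := Matrix.of fun i j => b j i with hV_def
  have hVo : Vᵀ * V = 1 := by
    ext i j
    rw [Matrix.mul_apply, Matrix.one_apply]
    have h := b.orthonormal
    rw [orthonormal_iff_ite] at h
    have h2 := h i j
    rw [PiLp.inner_apply] at h2
    simpa [hV_def, mul_comm] using h2
  have hRo : Rᵀ * R = 1 := rotMat_orth a h1 hc
  refine ⟨V, V * R, hVo, ?_, ?_, ?_, ?_⟩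
  · rw [Matrix.transpose_mul, Matrix.mul_assoc, ← Matrix.mul_assoc Vᵀ, hVo,
      Matrix.one_mul, hRo]
  · intro i
    simp only [hV_def, Matrix.of_apply, hb0, hu_def]
    rw [show (‖v‖⁻¹ • v : EuclideanSpace ℝ (Fin (m+1))) i = ‖v‖⁻¹ * v i from rfl]
    rw [inv_mul_eq_div]
  · intro i
    rw [Matrix.mul_apply]
    have hcol : ∀ k, R k 0 = a k := fun k => by simp [hR_def, rotMat]
    have hsum : (∑ k, a k • b k) i = uh i := by
      have := b.sum_repr uh
      rw [ha_def]
      rw [this]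
    rw [WithLp.ofLp_sum, Finset.sum_apply] at hsum
    calc ∑ k, V i k * R k 0 = ∑ k, a k * b k i := by
          refine Finset.sum_congr rfl fun k _ => ?_
          rw [hcol k, hV_def]
          simp [mul_comm]
      _ = uh i := by
          rw [← hsum]
          refine Finset.sum_congr rfl fun k _ => rfl
      _ = vh i / ‖vh‖ := by
          rw [huh_def,
            show (‖vh‖⁻¹ • vh : EuclideanSpace ℝ (Fin (m+1))) i = ‖vh‖⁻¹ * vh i from rfl,
            inv_mul_eq_div]
  · have hVhV : (V * R)ᵀ * V = Rᵀ := by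
      rw [Matrix.transpose_mul, Matrix.mul_assoc, hVo, Matrix.mul_one]
    rw [hVhV]
    have hfrob : ∑ i, ∑ j, ((1 - Rᵀ) i j) ^ 2 = 4 * (1 - a 0) := by
      simp only [Matrix.sub_apply, Matrix.transpose_apply]
      exact rotMat_frob a h1 hc
    have hb1 : specNorm (1 - Rᵀ) ≤ Real.sqrt (4 * (1 - a 0)) := by
      rw [← hfrob]; exact specNorm_le_frob _
    have heq : Real.sqrt (4 * (1 - a 0)) = Real.sqrt 2 * ‖u - uh‖ := by
      have : 4 * (1 - a 0) = 2 * ‖u - uh‖ ^ 2 := by rw [hdelta]; ring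
      rw [this, Real.sqrt_mul (by norm_num), Real.sqrt_sq (norm_nonneg _)]
    have hs2 : Real.sqrt 2 ≤ 2 := by
      nlinarith [Real.sq_sqrt (by norm_num : (0:ℝ) ≤ 2), Real.sqrt_nonneg 2]
    have hs0 : 0 ≤ Real.sqrt 2 := Real.sqrt_nonneg 2
    have hnvd : 0 < ‖v‖ - ‖v - vh‖ := by linarith
    calc specNorm (1 - Rᵀ) ≤ Real.sqrt 2 * ‖u - uh‖ := by rw [← heq]; exact hb1
      _ ≤ Real.sqrt 2 * (2 * ‖v - vh‖ / ‖v‖) := mul_le_mul_of_nonneg_left key hs0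
      _ = (2 * Real.sqrt 2 * ‖v - vh‖) / ‖v‖ := by ring
      _ ≤ 4 * ‖v - vh‖ / (‖v‖ - ‖v - vh‖) := by
          rw [div_le_div_iff₀ hnv hnvd]
          nlinarith [mul_nonneg (mul_nonneg (by linarith : (0:ℝ) ≤ 4 - 2 * Real.sqrt 2) hnv.le) hd0,
            mul_nonneg (mul_nonneg hs0 hd0) hd0]
end

section
/- Let s : ℝⁿ → ℝ have continuous partial derivatives up to order k in a neighborhood of x̄ ∈ ℝⁿ, and let Ṽ and V̂ be orthogonal n×n matrices with ‖V̂ᵀṼ − I‖₂ ≤ 1. Define s̃(ξ) = s(x̄ + Ṽξ) and ŝ(ξ) = s(x̄ + V̂ξ). Then for every choice of indices j_1,…,j_k ∈ {1,…,n}: |∂^k s̃/∂ξ_{j_1}⋯∂ξ_{j_k}(0) − ∂^k ŝ/∂ξ_{j_1}⋯∂ξ_{j_k}(0)| ≤ (2^k − 1) · ‖D^k s(x̄)‖₂ · ‖V̂ᵀṼ − I‖₂, where ‖D^k s(x̄)‖₂ denotes the Euclidean norm of the length-n^k vector of all k-th order partial derivatives of s at x̄ (listed with multiplicity in Kronecker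 order). -/
open scoped BigOperators Matrix

section AuxLemmas

private lemma fderiv_comp_const_add' {E F : Type*} [NormedAddCommGroup E] [NormedSpace ℝ E]
    [NormedAddCommGroup F] [NormedSpace ℝ F] (g : E → F) (c x : E) :
    fderiv ℝ (fun y => g (c + y)) x = fderiv ℝ g (c + x) := by
  by_cases h : DifferentiableAt ℝ g (c + x)
  · have h1 : HasFDerivAt (fun y => g (c + y)) (fderiv ℝ g (c + x)) x := by
      have := h.hasFDerivAt.comp x ((hasFDerivAt_id x).const_add c)
      simpa [Function.comp_def] using this
    exact h1.fderiv
  · rw [fderiv_zero_of_not_differentiableAt h, fderiv_zero_of_not_differentiableAt]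
    intro hd
    apply h
    have h2 : DifferentiableAt ℝ (fun z => z - c) (c + x) := differentiableAt_id.sub_const c
    have h3 : DifferentiableAt ℝ ((fun y => g (c + y)) ∘ fun z => z - c) (c + x) := by
      apply DifferentiableAt.comp
      · simpa [add_sub_cancel_left] using hd
      · exact h2
    have h4 : ((fun y => g (c + y)) ∘ fun z => z - c) = g := by
      funext z; simp [Function.comp]
    rwa [h4] at h3

private lemma iteratedFDeriv_comp_const_add' {E F : Type*} [NormedAddCommGroup E]
    [NormedSpace ℝ E] [NormedAddCommGroup F] [NormedSpace ℝ F] (k : ℕ) (g : E → F) (c : E) :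
    ∀ x, iteratedFDeriv ℝ k (fun y => g (c + y)) x = iteratedFDeriv ℝ k g (c + x) := by
  induction k with
  | zero => intro x; ext m; simp
  | succ k IH =>
    intro x; ext m
    rw [iteratedFDeriv_succ_apply_left, iteratedFDeriv_succ_apply_left]
    have h1 : iteratedFDeriv ℝ k (fun y => g (c + y)) = fun y => iteratedFDeriv ℝ k g (c + y) :=
      funext IH
    rw [h1, fderiv_comp_const_add' (iteratedFDeriv ℝ k g) c x]

private lemma norm_toEuclideanCLM_apply' {n : ℕ} (A : Matrix (Fin n) (Fin n) ℝ)
    (hA : Aᵀ * A = 1) (x : EuclideanSpace ℝ (Fin n)) :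
    ‖Matrix.toEuclideanCLM (𝕜 := ℝ) A x‖ = ‖x‖ := by
  set T := Matrix.toEuclideanCLM (𝕜 := ℝ) A with hT
  have h1 : star A * A = 1 := by
    rw [Matrix.star_eq_conjTranspose]
    have : Aᴴ = Aᵀ := by ext i j; simp [Matrix.conjTranspose_apply]
    rw [this, hA]
  have h2 : star T * T = 1 := by
    have := congrArg (Matrix.toEuclideanCLM (𝕜 := ℝ)) h1
    simpa [map_mul, map_one, map_star] using this
  have h4 : (ContinuousLinearMap.adjoint T) (T x) = x := by
    rw [← ContinuousLinearMap.star_eq_adjoint]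
    calc (star T) (T x) = (star T * T) x := rfl
      _ = x := by rw [h2]; rfl
  have h3 := ContinuousLinearMap.adjoint_inner_left T x (T x)
  rw [h4] at h3
  have h5 : ‖T x‖ ^ 2 = ‖x‖ ^ 2 := by
    rw [← @real_inner_self_eq_norm_sq, ← @real_inner_self_eq_norm_sq, h3]
  nlinarith [norm_nonneg (T x), norm_nonneg x]

private lemma opNorm_le_frobenius' {n k : ℕ}
    (T : ContinuousMultilinearMap ℝ (fun _ : Fin k => EuclideanSpace ℝ (Fin n)) ℝ) :
    ‖T‖ ≤ Real.sqrt (∑ p : Fin k → Fin n,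
      (T fun t => EuclideanSpace.single (p t) 1) ^ 2) := by
  apply ContinuousMultilinearMap.opNorm_le_bound (Real.sqrt_nonneg _)
  intro m
  have hrep : ∀ t, m t = ∑ i : Fin n,
      m t i • (EuclideanSpace.single i 1 : EuclideanSpace ℝ (Fin n)) := by
    intro t
    have := (EuclideanSpace.basisFun (Fin n) ℝ).sum_repr (m t)
    simp only [EuclideanSpace.basisFun_apply, EuclideanSpace.basisFun_repr] at this
    exact this.symm
  have hTm : T m = ∑ p : Fin k → Fin n,
      (∏ t, m t (p t)) * (T fun t => EuclideanSpace.single (p t) 1) := by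
    calc T m = T (fun t => ∑ i : Fin n, m t i • EuclideanSpace.single i 1) := by
          congr 1; funext t; exact hrep t
      _ = ∑ p : Fin k → Fin n, T (fun t => m t (p t) • EuclideanSpace.single (p t) 1) :=
          T.map_sum (fun t i => m t i • EuclideanSpace.single i 1)
      _ = ∑ p : Fin k → Fin n, (∏ t, m t (p t)) * (T fun t => EuclideanSpace.single (p t) 1) := by
          refine Finset.sum_congr rfl fun p _ => ?_
          rw [T.map_smul_univ]
          simp [smul_eq_mul]
  have key : (T m) ^ 2 ≤ (∑ p : Fin k → Fin n, (∏ t, m t (p t)) ^ 2)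
      * (∑ p : Fin k → Fin n, (T fun t => EuclideanSpace.single (p t) 1) ^ 2) := by
    rw [hTm]
    exact Finset.sum_mul_sq_le_sq_mul_sq _ _ _
  have hnorm2 : ∀ t, ‖m t‖ ^ 2 = ∑ i : Fin n, (m t i) ^ 2 := by
    intro t
    rw [EuclideanSpace.norm_eq, Real.sq_sqrt (by positivity)]
    simp [sq_abs]
  have hprod : ∑ p : Fin k → Fin n, (∏ t, m t (p t)) ^ 2 = (∏ t : Fin k, ‖m t‖) ^ 2 := by
    rw [← Finset.prod_pow]
    simp_rw [hnorm2]
    rw [Finset.prod_univ_sum]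
    simp_rw [← Finset.prod_pow]
    rw [Fintype.piFinset_univ]
  have hnn : (0:ℝ) ≤ ∏ t : Fin k, ‖m t‖ := Finset.prod_nonneg fun t _ => norm_nonneg _
  calc ‖T m‖ = Real.sqrt ((T m) ^ 2) := by rw [Real.sqrt_sq_eq_abs, Real.norm_eq_abs]
    _ ≤ Real.sqrt ((∑ p : Fin k → Fin n, (∏ t, m t (p t)) ^ 2)
        * (∑ p : Fin k → Fin n, (T fun t => EuclideanSpace.single (p t) 1) ^ 2)) :=
        Real.sqrt_le_sqrt key
    _ = Real.sqrt (∑ p : Fin k → Fin n, (∏ t, m t (p t)) ^ 2)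
        * Real.sqrt (∑ p : Fin k → Fin n, (T fun t => EuclideanSpace.single (p t) 1) ^ 2) :=
        Real.sqrt_mul (by positivity) _
    _ = (∏ t : Fin k, ‖m t‖)
        * Real.sqrt (∑ p : Fin k → Fin n, (T fun t => EuclideanSpace.single (p t) 1) ^ 2) := by
        rw [hprod, Real.sqrt_sq hnn]
    _ = Real.sqrt (∑ p : Fin k → Fin n, (T fun t => EuclideanSpace.single (p t) 1) ^ 2)
        * ∏ i, ‖m i‖ := mul_comm _ _

end AuxLemmas

/-- The Euclidean norm of the length-`n^k` vector of all `k`-th order mixed partial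
derivatives of `s` at `x` (listed with multiplicity, in Kronecker order). -/
noncomputable def dkNorm (n k : ℕ) (s : EuclideanSpace ℝ (Fin n) → ℝ)
    (x : EuclideanSpace ℝ (Fin n)) : ℝ :=
  Real.sqrt (∑ i : Fin k → Fin n,
    (iteratedFDeriv ℝ k s x (fun t => EuclideanSpace.single (i t) 1)) ^ 2)

private lemma chain_step' (n k : ℕ) (s : EuclideanSpace ℝ (Fin n) → ℝ)
    (xb : EuclideanSpace ℝ (Fin n))
    (U : Set (EuclideanSpace ℝ (Fin n))) (hU : IsOpen U) (hxU : xb ∈ U)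
    (hs : ContDiffOn ℝ k s U) (A : Matrix (Fin n) (Fin n) ℝ)
    (m : Fin k → EuclideanSpace ℝ (Fin n)) :
    iteratedFDeriv ℝ k (fun ξ => s (xb + Matrix.toEuclideanLin A ξ)) 0 m
      = iteratedFDeriv ℝ k s xb (fun t => Matrix.toEuclideanCLM (𝕜 := ℝ) A (m t)) := by
  set A' := Matrix.toEuclideanCLM (𝕜 := ℝ) A with hA'
  have hAL : (fun ξ => s (xb + Matrix.toEuclideanLin A ξ))
      = ((fun y => s (xb + y)) ∘ A') := by
    funext ξ
    have h : A' ξ = Matrix.toEuclideanLin A ξ := by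
      rw [hA', ← Matrix.coe_toEuclideanCLM_eq_toEuclideanLin]; rfl
    simp [Function.comp, h]
  set f : EuclideanSpace ℝ (Fin n) → ℝ := fun y => s (xb + y) with hf
  set U' : Set (EuclideanSpace ℝ (Fin n)) := (fun y => xb + y) ⁻¹' U with hU'def
  have hU'open : IsOpen U' := hU.preimage (continuous_const.add continuous_id)
  have h0U' : (0 : EuclideanSpace ℝ (Fin n)) ∈ U' := by
    simp only [hU'def, Set.mem_preimage, add_zero]; exact hxU
  have hfC : ContDiffOn ℝ k f U' :=
    hs.comp ((contDiff_const.add contDiff_id).contDiffOn) (Set.mapsTo_preimage _ U)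
  have hWopen : IsOpen (A' ⁻¹' U') := hU'open.preimage A'.continuous
  have h0W : (0 : EuclideanSpace ℝ (Fin n)) ∈ A' ⁻¹' U' := by
    simp only [Set.mem_preimage, map_zero]; exact h0U'
  rw [hAL]
  have e1 : iteratedFDeriv ℝ k (f ∘ A') 0 = iteratedFDerivWithin ℝ k (f ∘ A') (A' ⁻¹' U') 0 :=
    (iteratedFDerivWithin_of_isOpen k hWopen h0W).symm
  rw [e1, A'.iteratedFDerivWithin_comp_right hfC hU'open.uniqueDiffOn hWopen.uniqueDiffOn
      (by simpa using h0U') le_rfl,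
    ContinuousMultilinearMap.compContinuousLinearMap_apply, map_zero,
    iteratedFDerivWithin_of_isOpen k hU'open h0U']
  have e2 := iteratedFDeriv_comp_const_add' k s xb 0
  rw [hf, e2, add_zero]

/-- Bound on the difference of `k`-th partial derivatives of a scalar function under two
orthogonal changes of variables: if `‖V̂ᵀṼ − I‖₂ ≤ 1` then
`|∂ᵏs̃(0) − ∂ᵏŝ(0)| ≤ (2ᵏ−1)‖Dᵏs(x̄)‖₂‖V̂ᵀṼ − I‖₂`. -/
theorem partials_change_of_coords_diff (n k : ℕ)
    (s : EuclideanSpace ℝ (Fin n) → ℝ) (xb : EuclideanSpace ℝ (Fin n))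
    (U : Set (EuclideanSpace ℝ (Fin n))) (hU : IsOpen U) (hxU : xb ∈ U)
    (hs : ContDiffOn ℝ k s U)
    (Vt Vh : Matrix (Fin n) (Fin n) ℝ)
    (hVt : Vtᵀ * Vt = 1) (hVh : Vhᵀ * Vh = 1)
    (hclose : specNorm (Vhᵀ * Vt - 1) ≤ 1) :
    ∀ j : Fin k → Fin n,
      |iteratedFDeriv ℝ k (fun ξ => s (xb + Matrix.toEuclideanLin Vt ξ)) 0
          (fun t => EuclideanSpace.single (j t) 1)
        - iteratedFDeriv ℝ k (fun ξ => s (xb + Matrix.toEuclideanLin Vh ξ)) 0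
          (fun t => EuclideanSpace.single (j t) 1)|
      ≤ (2 ^ k - 1) * dkNorm n k s xb * specNorm (Vhᵀ * Vt - 1) := by
  intro j
  rw [chain_step' n k s xb U hU hxU hs Vt, chain_step' n k s xb U hU hxU hs Vh]
  set T := iteratedFDeriv ℝ k s xb with hTdef
  set ε := specNorm (Vhᵀ * Vt - 1) with hεdef
  have hε0 : 0 ≤ ε := norm_nonneg _
  set m₁ : Fin k → EuclideanSpace ℝ (Fin n) :=
    fun t => Matrix.toEuclideanCLM (𝕜 := ℝ) Vt (EuclideanSpace.single (j t) 1) with hm₁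
  set m₂ : Fin k → EuclideanSpace ℝ (Fin n) :=
    fun t => Matrix.toEuclideanCLM (𝕜 := ℝ) Vh (EuclideanSpace.single (j t) 1) with hm₂
  have hdk0 : 0 ≤ dkNorm n k s xb := Real.sqrt_nonneg _
  have hT : ‖T‖ ≤ dkNorm n k s xb := opNorm_le_frobenius' T
  have hm1norm : ∀ t, ‖m₁ t‖ = 1 := by
    intro t
    rw [hm₁]
    rw [norm_toEuclideanCLM_apply' Vt hVt]
    simp [EuclideanSpace.norm_single]
  have hm2norm : ∀ t, ‖m₂ t‖ = 1 := by
    intro t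
    rw [hm₂]
    rw [norm_toEuclideanCLM_apply' Vh hVh]
    simp [EuclideanSpace.norm_single]
  have hdiff : ∀ t, ‖m₁ t - m₂ t‖ ≤ ε := by
    intro t
    have h1 : m₁ t - m₂ t
        = Matrix.toEuclideanCLM (𝕜 := ℝ) (Vt - Vh) (EuclideanSpace.single (j t) 1) := by
      rw [map_sub]; rfl
    have h2 : Vt - Vh = Vh * (Vhᵀ * Vt - 1) := by
      have hVh' : Vh * Vhᵀ = 1 := mul_eq_one_comm.mp hVh
      rw [Matrix.mul_sub, ← Matrix.mul_assoc, hVh', Matrix.one_mul, Matrix.mul_one]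
    have h3 : Matrix.toEuclideanCLM (𝕜 := ℝ) (Vh * (Vhᵀ * Vt - 1)) (EuclideanSpace.single (j t) 1)
        = Matrix.toEuclideanCLM (𝕜 := ℝ) Vh
          (Matrix.toEuclideanCLM (𝕜 := ℝ) (Vhᵀ * Vt - 1) (EuclideanSpace.single (j t) 1)) := by
      rw [map_mul]; rfl
    rw [h1, h2, h3, norm_toEuclideanCLM_apply' Vh hVh]
    calc ‖Matrix.toEuclideanCLM (𝕜 := ℝ) (Vhᵀ * Vt - 1) (EuclideanSpace.single (j t) 1)‖
        ≤ ‖Matrix.toEuclideanCLM (n := Fin n) (𝕜 := ℝ) (Vhᵀ * Vt - 1)‖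
          * ‖(EuclideanSpace.single (j t) 1 : EuclideanSpace ℝ (Fin n))‖ :=
          ContinuousLinearMap.le_opNorm _ _
      _ = ε := by
          rw [EuclideanSpace.norm_single, norm_one, mul_one, hεdef]
          rfl
  have hb := T.norm_image_sub_le' m₁ m₂
  have hS0 : (0:ℝ) ≤ ∑ i, ∏ t, if t = i then ‖m₁ i - m₂ i‖ else max ‖m₁ t‖ ‖m₂ t‖ :=
    Finset.sum_nonneg fun i _ => Finset.prod_nonneg fun t _ => by
      split <;> positivity
  have hsum : (∑ i, ∏ t, if t = i then ‖m₁ i - m₂ i‖ else max ‖m₁ t‖ ‖m₂ t‖) ≤ k * ε := by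
    have hterm : ∀ i : Fin k,
        (∏ t, if t = i then ‖m₁ i - m₂ i‖ else max ‖m₁ t‖ ‖m₂ t‖) ≤ ε := by
      intro i
      have heq : ∀ t : Fin k, (if t = i then ‖m₁ i - m₂ i‖ else max ‖m₁ t‖ ‖m₂ t‖)
          = (if t = i then ‖m₁ i - m₂ i‖ else 1) := by
        intro t
        split
        · rfl
        · rw [hm1norm, hm2norm]; simp
      rw [Finset.prod_congr rfl (fun t _ => heq t), Finset.prod_ite_eq' Finset.univ i
        (fun _ => ‖m₁ i - m₂ i‖)]
      simpa using hdiff i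
    calc (∑ i, ∏ t, if t = i then ‖m₁ i - m₂ i‖ else max ‖m₁ t‖ ‖m₂ t‖)
        ≤ ∑ _i : Fin k, ε := Finset.sum_le_sum fun i _ => hterm i
      _ = k * ε := by simp [Finset.sum_const, Finset.card_univ, nsmul_eq_mul]
  have hk2 : (k : ℝ) ≤ 2 ^ k - 1 := by
    have h : (k : ℝ) + 1 ≤ 2 ^ k := by exact_mod_cast (Nat.lt_two_pow_self : k < 2 ^ k)
    linarith
  have hfinal : ‖T m₁ - T m₂‖ ≤ (2 ^ k - 1) * dkNorm n k s xb * ε := by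
    calc ‖T m₁ - T m₂‖
        ≤ ‖T‖ * ∑ i, ∏ t, if t = i then ‖m₁ i - m₂ i‖ else max ‖m₁ t‖ ‖m₂ t‖ := hb
      _ ≤ dkNorm n k s xb * (k * ε) :=
          mul_le_mul hT hsum hS0 hdk0
      _ ≤ dkNorm n k s xb * ((2 ^ k - 1) * ε) :=
          mul_le_mul_of_nonneg_left (mul_le_mul_of_nonneg_right hk2 hε0) hdk0
      _ = (2 ^ k - 1) * dkNorm n k s xb * ε := by ring
  calc |T m₁ - T m₂| = ‖T m₁ - T m₂‖ := (Real.norm_eq_abs _).symm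
    _ ≤ (2 ^ k - 1) * dkNorm n k s xb * ε := hfinal
end

section
/- Let s, s̄ : ℝⁿ → ℝ have continuous partial derivatives up to order k in a neighborhood of x̄ ∈ ℝⁿ, and let Ṽ and V̂ be orthogonal n×n matrices with ‖V̂ᵀṼ − I‖₂ ≤ 1. Define s̃(ξ) = s(x̄ + Ṽξ) and ŝ(ξ) = s̄(x̄ + V̂ξ). Then for every choice of indices j_1,…,j_k ∈ {1,…,n}: |∂^k s̃/∂ξ_{j_1}⋯∂ξ_{j_k}(0) − ∂^k ŝ/∂ξ_{j_1}⋯∂ξ_{j_k}(0)| ≤ ‖D^k (s − s̄)(x̄)‖₂ + (2^k − 1) · ‖D^k s(x̄)‖₂ · ‖V̂ᵀṼ − I‖₂. -/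
open scoped BigOperators Matrix

section Aux

variable {n k : ℕ}

lemma euclid_eq_sum_single (x : EuclideanSpace ℝ (Fin n)) :
    x = ∑ i, x i • EuclideanSpace.single i (1 : ℝ) := by
  ext j
  have h := map_sum (EuclideanSpace.proj (𝕜 := ℝ) j)
    (fun i => x i • EuclideanSpace.single i (1 : ℝ)) Finset.univ
  simp only [PiLp.proj_apply, EuclideanSpace.proj] at h
  rw [h]
  simp [EuclideanSpace.single_apply]

/-- Frobenius-type bound for a continuous multilinear map on Euclidean space. -/
lemma frob_bound (T : ContinuousMultilinearMap ℝ
      (fun _ : Fin k => EuclideanSpace ℝ (Fin n)) ℝ)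
    (m : Fin k → EuclideanSpace ℝ (Fin n)) :
    |T m| ≤ Real.sqrt (∑ p : Fin k → Fin n,
        (T fun t => EuclideanSpace.single (p t) 1) ^ 2) * ∏ t, ‖m t‖ := by
  classical
  have hexp : T m = ∑ p : Fin k → Fin n,
      (∏ t, m t (p t)) * (T fun t => EuclideanSpace.single (p t) 1) := by
    have hm : m = fun t => ∑ i, m t i • EuclideanSpace.single i (1 : ℝ) :=
      funext fun t => euclid_eq_sum_single (m t)
    conv_lhs => rw [hm]
    rw [show (T fun t => ∑ i, m t i • EuclideanSpace.single i (1 : ℝ))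
        = T.toMultilinearMap (fun t => ∑ i, m t i • EuclideanSpace.single i (1 : ℝ)) from rfl,
      T.toMultilinearMap.map_sum]
    refine Finset.sum_congr rfl fun p _ => ?_
    rw [T.toMultilinearMap.map_smul_univ]
    simp [smul_eq_mul]
  rw [hexp]
  have hCS := Finset.sum_mul_sq_le_sq_mul_sq Finset.univ
    (fun p : Fin k → Fin n => ∏ t, m t (p t))
    (fun p : Fin k → Fin n => T fun t => EuclideanSpace.single (p t) 1)
  have habs : |∑ p : Fin k → Fin n,
      (∏ t, m t (p t)) * (T fun t => EuclideanSpace.single (p t) 1)|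
      ≤ Real.sqrt ((∑ p : Fin k → Fin n, (∏ t, m t (p t)) ^ 2) *
        ∑ p : Fin k → Fin n, (T fun t => EuclideanSpace.single (p t) 1) ^ 2) := by
    rw [← Real.sqrt_sq_eq_abs]
    exact Real.sqrt_le_sqrt hCS
  refine habs.trans ?_
  rw [Real.sqrt_mul (by positivity), mul_comm]
  refine mul_le_mul_of_nonneg_left ?_ (Real.sqrt_nonneg _)
  -- √(∑ ∏ (m t (p t))²) = ∏ ‖m t‖
  have h1 : (∑ p : Fin k → Fin n, (∏ t, m t (p t)) ^ 2)
      = ∏ t, ∑ i, (m t i) ^ 2 := by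
    rw [Finset.prod_univ_sum]
    simp [← Finset.prod_pow]
  have h2 : ∀ t, (∑ i, (m t i) ^ 2) = ‖m t‖ ^ 2 := by
    intro t
    rw [EuclideanSpace.norm_eq]
    rw [Real.sq_sqrt (by positivity)]
    simp [Real.norm_eq_abs, sq_abs]
  rw [h1]
  simp_rw [h2]
  rw [Finset.prod_pow]
  exact le_of_eq (Real.sqrt_sq (Finset.prod_nonneg fun t _ => norm_nonneg _))

end Aux

section Aux2

variable {n k : ℕ}

lemma hasFTaylor_comp_const_add {E F : Type*} [NormedAddCommGroup E] [NormedSpace ℝ E]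
    [NormedAddCommGroup F] [NormedSpace ℝ F] {N : WithTop ℕ∞} {f : E → F}
    {p : E → FormalMultilinearSeries ℝ E F} {s : Set E}
    (h : HasFTaylorSeriesUpToOn N f p s) (c : E) :
    HasFTaylorSeriesUpToOn N (fun x => f (c + x)) (fun x => p (c + x))
      ((fun x => c + x) ⁻¹' s) := by
  constructor
  · intro x hx
    exact h.zero_eq _ hx
  · intro m hm x hx
    have h1 := h.fderivWithin m hm (c + x) hx
    have h2 : HasFDerivWithinAt (fun y : E => c + y) (ContinuousLinearMap.id ℝ E)
        ((fun x => c + x) ⁻¹' s) x := by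
      have := ((hasFDerivAt_id (𝕜 := ℝ) x).const_add c).hasFDerivWithinAt
        (s := (fun x => c + x) ⁻¹' s)
      exact this
    have h3 := h1.comp x h2 (Set.mapsTo_preimage _ _)
    exact h3
  · intro m hm
    exact (h.cont m hm).comp ((continuous_const.add continuous_id).continuousOn)
      (Set.mapsTo_preimage _ _)

lemma iteratedFDeriv_comp_affine {f : EuclideanSpace ℝ (Fin n) → ℝ}
    {U : Set (EuclideanSpace ℝ (Fin n))} (hU : IsOpen U)
    {xb : EuclideanSpace ℝ (Fin n)} (hxU : xb ∈ U)
    (hf : ContDiffOn ℝ k f U) (V : Matrix (Fin n) (Fin n) ℝ)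
    (m : Fin k → EuclideanSpace ℝ (Fin n)) :
    iteratedFDeriv ℝ k (fun ξ => f (xb + Matrix.toEuclideanLin V ξ)) 0 m
      = iteratedFDeriv ℝ k f xb (fun t => Matrix.toEuclideanLin V (m t)) := by
  classical
  set g : EuclideanSpace ℝ (Fin n) →L[ℝ] EuclideanSpace ℝ (Fin n) :=
    Matrix.toEuclideanCLM (𝕜 := ℝ) V with hgdef
  have hcoe : ∀ x, Matrix.toEuclideanLin V x = g x := by
    intro x
    rw [← Matrix.coe_toEuclideanCLM_eq_toEuclideanLin]
    rfl
  have h := hf.ftaylorSeriesWithin hU.uniqueDiffOn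
  have h1 := hasFTaylor_comp_const_add h xb
  have h2 := h1.compContinuousLinearMap g
  have hWopen : IsOpen (⇑g ⁻¹' ((fun x => xb + x) ⁻¹' U)) :=
    (hU.preimage (continuous_const.add continuous_id)).preimage g.cont
  have h0 : (0 : EuclideanSpace ℝ (Fin n)) ∈ ⇑g ⁻¹' ((fun x => xb + x) ⁻¹' U) := by
    simp only [Set.mem_preimage, map_zero, add_zero]
    exact hxU
  have h3 := h2.eq_iteratedFDerivWithin_of_uniqueDiffOn le_rfl hWopen.uniqueDiffOn h0
  have h4 := iteratedFDerivWithin_of_isOpen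
    (f := (fun y => f (xb + y)) ∘ ⇑g) (𝕜 := ℝ) k hWopen h0
  have hfun : (fun ξ => f (xb + Matrix.toEuclideanLin V ξ))
      = (fun y => f (xb + y)) ∘ ⇑g := by
    funext ξ
    simp [Function.comp, hcoe]
  rw [hfun, ← h4, ← h3]
  simp only [map_zero, add_zero, ContinuousMultilinearMap.compContinuousLinearMap_apply]
  have h5 : ftaylorSeriesWithin ℝ f U xb k = iteratedFDerivWithin ℝ k f U xb := rfl
  rw [h5, iteratedFDerivWithin_of_isOpen (𝕜 := ℝ) k hU hxU]
  simp only [hcoe]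

end Aux2

section Aux3

open RealInnerProductSpace

variable {n k : ℕ}

lemma orth_isometry {V : Matrix (Fin n) (Fin n) ℝ} (hV : Vᵀ * V = 1)
    (x : EuclideanSpace ℝ (Fin n)) :
    ‖Matrix.toEuclideanCLM (𝕜 := ℝ) V x‖ = ‖x‖ := by
  set u := Matrix.toEuclideanCLM (𝕜 := ℝ) V with hu
  have hstar : star u * u = 1 := by
    have h1 : star V * V = 1 := by
      rw [Matrix.star_eq_conjTranspose, Matrix.conjTranspose_eq_transpose_of_trivial, hV]
    rw [hu, ← map_star, ← map_mul, h1, map_one]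
  have hinner : (inner ℝ (u x) (u x) : ℝ) = (inner ℝ x x : ℝ) := by
    calc (inner ℝ (u x) (u x) : ℝ)
        = (inner ℝ ((ContinuousLinearMap.adjoint u) (u x)) x : ℝ) :=
          (ContinuousLinearMap.adjoint_inner_left u x (u x)).symm
      _ = (inner ℝ ((star u * u) x) x : ℝ) := by
          rw [ContinuousLinearMap.star_eq_adjoint]; rfl
      _ = (inner ℝ x x : ℝ) := by rw [hstar]; rfl
  rw [real_inner_self_eq_norm_mul_norm, real_inner_self_eq_norm_mul_norm] at hinner
  exact (mul_self_inj_of_nonneg (norm_nonneg _) (norm_nonneg _)).mp hinner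

end Aux3

section Aux4

variable {n k : ℕ}

lemma main_est (A B D : ContinuousMultilinearMap ℝ
      (fun _ : Fin k => EuclideanSpace ℝ (Fin n)) ℝ)
    (hAD : ∀ mm, A mm = D mm + B mm)
    (m₁ m₂ : Fin k → EuclideanSpace ℝ (Fin n))
    (hm1 : ∀ t, ‖m₁ t‖ = 1) (hm2 : ∀ t, ‖m₂ t‖ = 1)
    (ε : ℝ) (hε : 0 ≤ ε) (hd : ∀ t, ‖m₁ t - m₂ t‖ ≤ ε) :
    |A m₁ - B m₂| ≤
      Real.sqrt (∑ p : Fin k → Fin n, (D fun t => EuclideanSpace.single (p t) 1) ^ 2)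
      + (2 ^ k - 1) * Real.sqrt (∑ p : Fin k → Fin n,
          (A fun t => EuclideanSpace.single (p t) 1) ^ 2) * ε := by
  classical
  set CD := Real.sqrt (∑ p : Fin k → Fin n,
    (D fun t => EuclideanSpace.single (p t) 1) ^ 2) with hCD
  set CA := Real.sqrt (∑ p : Fin k → Fin n,
    (A fun t => EuclideanSpace.single (p t) 1) ^ 2) with hCA
  have key1 : |D m₂| ≤ CD := by
    have h := frob_bound D m₂
    have hprod : (∏ t, ‖m₂ t‖) = 1 := by
      rw [Finset.prod_eq_one fun t _ => hm2 t]
    rw [hprod, mul_one] at h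
    exact h
  have key2 : |A m₁ - A m₂| ≤ CA * ((2 ^ k - 1) * ε) := by
    have hH : ∀ mm : Fin k → EuclideanSpace ℝ (Fin n),
        ‖A.toMultilinearMap mm‖ ≤ CA * ∏ t, ‖mm t‖ := by
      intro mm
      rw [Real.norm_eq_abs]
      exact frob_bound A mm
    have hb := A.toMultilinearMap.norm_image_sub_le_of_bound'
      (Real.sqrt_nonneg _) hH m₁ m₂
    rw [Real.norm_eq_abs] at hb
    refine hb.trans ?_
    have hsum : (∑ i : Fin k, ∏ t : Fin k,
        if t = i then ‖m₁ i - m₂ i‖ else max ‖m₁ t‖ ‖m₂ t‖) ≤ (2 ^ k - 1) * ε := by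
      have hterm : ∀ i : Fin k, (∏ t : Fin k,
          if t = i then ‖m₁ i - m₂ i‖ else max ‖m₁ t‖ ‖m₂ t‖) ≤ ε := by
        intro i
        have h1 : (∏ t : Fin k,
            if t = i then ‖m₁ i - m₂ i‖ else max ‖m₁ t‖ ‖m₂ t‖)
            ≤ ∏ t : Fin k, if t = i then ε else 1 := by
          refine Finset.prod_le_prod (fun t _ => ?_) (fun t _ => ?_)
          · split
            · exact norm_nonneg _
            · exact le_max_of_le_left (norm_nonneg _)
          · split
            · exact hd i
            · rw [hm1 t, hm2 t, max_self]
        refine h1.trans ?_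
        rw [Finset.prod_ite_eq' Finset.univ i (fun _ => ε)]
        simp
      calc (∑ i : Fin k, ∏ t : Fin k,
          if t = i then ‖m₁ i - m₂ i‖ else max ‖m₁ t‖ ‖m₂ t‖)
          ≤ ∑ _i : Fin k, ε := Finset.sum_le_sum fun i _ => hterm i
        _ = (k : ℝ) * ε := by
            rw [Finset.sum_const, Finset.card_univ, Fintype.card_fin, nsmul_eq_mul]
        _ ≤ (2 ^ k - 1) * ε := by
            refine mul_le_mul_of_nonneg_right ?_ hε
            have h2 : (k : ℝ) + 1 ≤ (2 : ℝ) ^ k := by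
              exact_mod_cast Nat.succ_le_of_lt (Nat.lt_two_pow_self (n := k))
            linarith
    exact mul_le_mul_of_nonneg_left hsum (Real.sqrt_nonneg _)
  have hsplit : A m₁ - B m₂ = D m₂ + (A m₁ - A m₂) := by
    rw [hAD m₂]; ring
  calc |A m₁ - B m₂| = |D m₂ + (A m₁ - A m₂)| := by rw [hsplit]
    _ ≤ |D m₂| + |A m₁ - A m₂| := abs_add_le _ _
    _ ≤ CD + CA * ((2 ^ k - 1) * ε) := add_le_add key1 key2
    _ = CD + (2 ^ k - 1) * CA * ε := by ring

end Aux4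



/-- Bound on the difference of `k`-th partial derivatives of two different functions
under two orthogonal changes of variables: with `s̃(ξ) = s(x̄ + Ṽξ)` and
`ŝ(ξ) = s̄(x̄ + V̂ξ)`,
`|∂ᵏs̃(0) − ∂ᵏŝ(0)| ≤ ‖Dᵏ(s − s̄)(x̄)‖₂ + (2ᵏ−1)‖Dᵏs(x̄)‖₂‖V̂ᵀṼ − I‖₂`. -/
theorem two_function_partials_change_of_coords_diff (n k : ℕ)
    (s sb : EuclideanSpace ℝ (Fin n) → ℝ) (xb : EuclideanSpace ℝ (Fin n))
    (U : Set (EuclideanSpace ℝ (Fin n))) (hU : IsOpen U) (hxU : xb ∈ U)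
    (hs : ContDiffOn ℝ k s U) (hsb : ContDiffOn ℝ k sb U)
    (Vt Vh : Matrix (Fin n) (Fin n) ℝ)
    (hVt : Vtᵀ * Vt = 1) (hVh : Vhᵀ * Vh = 1)
    (hclose : specNorm (Vhᵀ * Vt - 1) ≤ 1) :
    ∀ j : Fin k → Fin n,
      |iteratedFDeriv ℝ k (fun ξ => s (xb + Matrix.toEuclideanLin Vt ξ)) 0
          (fun t => EuclideanSpace.single (j t) 1)
        - iteratedFDeriv ℝ k (fun ξ => sb (xb + Matrix.toEuclideanLin Vh ξ)) 0
          (fun t => EuclideanSpace.single (j t) 1)|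
      ≤ dkNorm n k (fun y => s y - sb y) xb
        + (2 ^ k - 1) * dkNorm n k s xb * specNorm (Vhᵀ * Vt - 1) := by
  intro j
  classical
  have hcoe : ∀ (M : Matrix (Fin n) (Fin n) ℝ) (x : EuclideanSpace ℝ (Fin n)),
      Matrix.toEuclideanLin M x = Matrix.toEuclideanCLM (𝕜 := ℝ) M x := by
    intro M x
    rw [← Matrix.coe_toEuclideanCLM_eq_toEuclideanLin]
    rfl
  rw [iteratedFDeriv_comp_affine hU hxU hs Vt _,
    iteratedFDeriv_comp_affine hU hxU hsb Vh _]
  -- notation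
  set A := iteratedFDeriv ℝ k s xb with hA
  set B := iteratedFDeriv ℝ k sb xb with hB
  set D := iteratedFDeriv ℝ k (fun y => s y - sb y) xb with hD
  have hAD : ∀ mm, A mm = D mm + B mm := by
    intro mm
    have h1 : iteratedFDerivWithin ℝ k
        (fun x => (fun y => s y - sb y) x + sb x) U xb
        = iteratedFDerivWithin ℝ k (fun y => s y - sb y) U xb
          + iteratedFDerivWithin ℝ k sb U xb :=
      iteratedFDerivWithin_add_apply' ((hs.sub hsb) xb hxU) (hsb xb hxU) hU.uniqueDiffOn hxU
    have h2 : (fun x => (fun y => s y - sb y) x + sb x) = s := by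
      funext y; simp
    rw [h2, iteratedFDerivWithin_of_isOpen (𝕜 := ℝ) (f := s) k hU hxU,
      iteratedFDerivWithin_of_isOpen (𝕜 := ℝ) (f := fun y => s y - sb y) k hU hxU,
      iteratedFDerivWithin_of_isOpen (𝕜 := ℝ) (f := sb) k hU hxU] at h1
    rw [← hA, ← hB, ← hD] at h1
    rw [h1]
    rfl
  -- the two vector families
  have hε : (0 : ℝ) ≤ specNorm (Vhᵀ * Vt - 1) := by
    unfold specNorm
    exact norm_nonneg _
  have hm1 : ∀ t, ‖Matrix.toEuclideanLin Vt (EuclideanSpace.single (j t) (1 : ℝ))‖ = 1 := by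
    intro t
    rw [hcoe, orth_isometry hVt, EuclideanSpace.norm_single]
    exact norm_one
  have hm2 : ∀ t, ‖Matrix.toEuclideanLin Vh (EuclideanSpace.single (j t) (1 : ℝ))‖ = 1 := by
    intro t
    rw [hcoe, orth_isometry hVh, EuclideanSpace.norm_single]
    exact norm_one
  have hd : ∀ t, ‖Matrix.toEuclideanLin Vt (EuclideanSpace.single (j t) (1 : ℝ))
      - Matrix.toEuclideanLin Vh (EuclideanSpace.single (j t) (1 : ℝ))‖
      ≤ specNorm (Vhᵀ * Vt - 1) := by
    intro t
    have hVh' : Vh * Vhᵀ = 1 := mul_eq_one_comm.mp hVh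
    have hfact : Vt - Vh = Vh * (Vhᵀ * Vt - 1) := by
      rw [Matrix.mul_sub, ← Matrix.mul_assoc, hVh', Matrix.one_mul, Matrix.mul_one]
    have heq : Matrix.toEuclideanLin Vt (EuclideanSpace.single (j t) (1 : ℝ))
        - Matrix.toEuclideanLin Vh (EuclideanSpace.single (j t) (1 : ℝ))
        = Matrix.toEuclideanCLM (𝕜 := ℝ) Vh
            (Matrix.toEuclideanCLM (𝕜 := ℝ) (Vhᵀ * Vt - 1)
              (EuclideanSpace.single (j t) (1 : ℝ))) := by
      rw [hcoe, hcoe, ← ContinuousLinearMap.sub_apply, ← map_sub, hfact, map_mul]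
      rfl
    rw [heq, orth_isometry hVh]
    calc ‖Matrix.toEuclideanCLM (𝕜 := ℝ) (Vhᵀ * Vt - 1)
          (EuclideanSpace.single (j t) (1 : ℝ))‖
        ≤ ‖(Matrix.toEuclideanCLM (𝕜 := ℝ) (Vhᵀ * Vt - 1) :
              EuclideanSpace ℝ (Fin n) →L[ℝ] EuclideanSpace ℝ (Fin n))‖
            * ‖EuclideanSpace.single (j t) (1 : ℝ)‖ :=
          ContinuousLinearMap.le_opNorm _ _
      _ = specNorm (Vhᵀ * Vt - 1) := by
          rw [EuclideanSpace.norm_single, norm_one, mul_one]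
          rfl
  have := main_est A B D hAD
    (fun t => Matrix.toEuclideanLin Vt (EuclideanSpace.single (j t) (1 : ℝ)))
    (fun t => Matrix.toEuclideanLin Vh (EuclideanSpace.single (j t) (1 : ℝ)))
    hm1 hm2 (specNorm (Vhᵀ * Vt - 1)) hε hd
  exact this
end
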